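/- arXiv:1710.01424 — 11 statements merged into one kernel-verified Lean document; each statement's English description precedes it below -/
import Mathlib

section
/- Let q be a prime power, 𝔽_q the field with q elements, and 𝒜 = (H_i)_{i∈I} a hyperplane arrangement in 𝔽_q^d. For p ∈ 𝔽_q^d let h(p) = #{i ∈ I : p ∈ H_i}. Then the following identity holds in the polynomial ring ℤ[t]: Σ_{p ∈ 𝔽_q^d} t^{h(p)} = Σ_{ℬ ⊆ I central} (t−1)^{|ℬ|} q^{d−r(ℬ)}. (The right-hand side equals q^{d−r(𝒜)} · χ̄(𝒜; q, t), where χ̄ denotes the coboundary polynomial of 𝒜; this is the finite field method.) -/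
open Polynomial
open scoped Classical

/-!
Writing `t = (t - 1) + 1` and expanding, `t ^ h(p)` is the sum of `(t - 1) ^ |B|` over the
subfamilies `B` of hyperplanes through `p`. Exchanging the two sums, each `B` contributes
`(t - 1) ^ |B|` times the number of points of `⋂ B`. That intersection is an affine subspace, so
when it is nonempty it is a torsor over its direction and has `q ^ dim` points.
-/

open Finset

theorem pow_card_eq_sum_powerset {R ι : Type*} [CommRing R] (x : R) (s : Finset ι) :
    x ^ #s = ∑ t ∈ s.powerset, (x - 1) ^ #t := by
  simpa using (sum_pow_mul_eq_add_pow (x - 1) 1 s).symm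

theorem sum_pow_card_mem_eq_sum_mul_natCard_iInter {α ι R : Type*} [Fintype α] [Fintype ι]
    [CommRing R] (H : ι → Set α) (x : R) :
    ∑ p : α, x ^ #{i | p ∈ H i} = ∑ B : Finset ι, (x - 1) ^ #B * Nat.card ↑(⋂ i ∈ B, H i) := by
  calc ∑ p : α, x ^ #{i | p ∈ H i}
      = ∑ p : α, ∑ B : Finset ι, if p ∈ ⋂ i ∈ B, H i then (x - 1) ^ #B else 0 := by
        refine sum_congr rfl fun p _ => ?_
        rw [pow_card_eq_sum_powerset, ← sum_filter]
        congr 1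
        ext B
        simp [subset_iff]
    _ = _ := by
        rw [sum_comm]
        refine sum_congr rfl fun B _ => ?_
        rw [← sum_filter, sum_const, nsmul_eq_mul, mul_comm, Nat.card_eq_fintype_card,
          Fintype.card_subtype]

theorem AffineSubspace.natCard_eq_pow_finrank_direction {F V P : Type*} [Field F] [Fintype F]
    [AddCommGroup V] [Module F V] [Finite V] [AddTorsor V P] {S : AffineSubspace F P}
    (hS : (S : Set P).Nonempty) :
    Nat.card (S : Set P) = Fintype.card F ^ Module.finrank F S.direction := by
  obtain ⟨p, hp⟩ := hS
  have : Nonempty S := ⟨⟨p, hp⟩⟩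
  have := Fintype.ofFinite S.direction
  calc Nat.card (S : Set P) = Nat.card S.direction :=
        Nat.card_congr (Equiv.vaddConst (⟨p, hp⟩ : S)).symm
    _ = _ := by rw [Nat.card_eq_fintype_card, Module.card_eq_pow_finrank (K := F)]

theorem iInter_setOf_apply_eq_eq_coe_iInf {F V W ι : Type*} [Field F] [AddCommGroup V] [Module F V]
    [AddCommGroup W] [Module F W] (l : ι → V →ₗ[F] W) (b : ι → W) (B : Finset ι) :
    ⋂ i ∈ B, {x | l i x = b i}
      = ((⨅ i ∈ B, (affineSpan F {b i}).comap (l i).toAffineMap : AffineSubspace F V) : Set V) := by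
  simp [AffineSubspace.coe_comap, AffineSubspace.coe_affineSpan_singleton, Set.preimage]

theorem finite_field_method_general
    {F : Type} [Field F] [Fintype F] (q : ℕ) (hq : Fintype.card F = q)
    {d : ℕ} {I : Type} [Fintype I]
    (l : I → ((Fin d → F) →ₗ[F] F)) (b : I → F)
    (H : I → Set (Fin d → F)) (hH : ∀ i, H i = {x | l i x = b i}) :
    ∑ p : Fin d → F, (X : Polynomial ℤ) ^ (Finset.univ.filter (fun i => p ∈ H i)).card
      = ∑ B : Finset I,
          if (⋂ i ∈ B, H i).Nonempty then
            ((X : Polynomial ℤ) - 1) ^ B.card *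
              (q : Polynomial ℤ) ^
                (d - (d - Module.finrank F ↥((affineSpan F (⋂ i ∈ B, H i)).direction)))
          else 0 := by
  obtain rfl : H = fun i => {x | l i x = b i} := funext hH
  rw [sum_pow_card_mem_eq_sum_mul_natCard_iInter]
  refine sum_congr rfl fun B _ => ?_
  split_ifs with hne
  · rw [iInter_setOf_apply_eq_eq_coe_iInf] at hne ⊢
    have hdim (S : AffineSubspace F (Fin d → F)) : Module.finrank F S.direction ≤ d :=
      (Submodule.finrank_le _).trans (Module.finrank_fin_fun F).le
    rw [Nat.sub_sub_self (hdim _), AffineSubspace.affineSpan_coe,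
      AffineSubspace.natCard_eq_pow_finrank_direction hne, hq]
    push_cast
    rfl
  · simp [Set.not_nonempty_iff_eq_empty.1 hne]

/-- **Finite field method.** Let `F` be the finite field with `q` elements and
`𝒜 = (H i)_{i : I}` a hyperplane arrangement in `F^d`, where `H i = {x | l i x = b i}` for a
nonzero linear functional `l i` and scalar `b i`.  For `p ∈ F^d` let `h p` be the number of
hyperplanes containing `p`.  Then, in `ℤ[t]`,
`Σ_p t^(h p) = Σ_{B central} (t-1)^|B| * q^(d - r B)`,
where `B` ranges over central subfamilies and `r B = d - dim ⋂ B`. -/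
theorem finite_field_method
    {F : Type} [Field F] [Fintype F] (q : ℕ) (hq : Fintype.card F = q)
    {d : ℕ} {I : Type} [Fintype I]
    (l : I → ((Fin d → F) →ₗ[F] F)) (hl : ∀ i, l i ≠ 0) (b : I → F)
    (H : I → Set (Fin d → F)) (hH : ∀ i, H i = {x | l i x = b i}) :
    ∑ p : Fin d → F, (X : Polynomial ℤ) ^ (Finset.univ.filter (fun i => p ∈ H i)).card
      = ∑ B : Finset I,
          if (⋂ i ∈ B, H i).Nonempty then
            ((X : Polynomial ℤ) - 1) ^ B.card *
              (q : Polynomial ℤ) ^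
                (d - (d - Module.finrank F ↥((affineSpan F (⋂ i ∈ B, H i)).direction)))
          else 0 :=
  finite_field_method_general q hq l b H hH
end

section
/- Let 𝒜 = (H_i)_{i∈I} be a hyperplane arrangement in 𝕜^d over an arbitrary field 𝕜. A flat of 𝒜 is a nonempty intersection ⋂_{i∈ℬ} H_i over a central subfamily ℬ ⊆ I (so 𝕜^d itself is a flat, coming from ℬ = ∅). Let L(𝒜) be the finite poset of flats ordered by reverse inclusion, whose minimum element is 𝕜^d, and let μ : L(𝒜) → ℤ be its Möbius function, defined recursively by the condition that Σ_{F ≤ G} μ(F) equals 1 if G = 𝕜^d and 0 otherwise. Then, in ℤ[q], Σ_{F ∈ L(𝒜)} μ(F) q^{dim F} = Σ_{ℬ ⊆ I central} (−1)^{|ℬ|} q^{d−r(ℬ)} (Whitney's theorem: the Möbius-function definition of the characteristic polynomial agrees with the central-subset expansion). -/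
open Polynomial
open scoped Classical

/-!
Put `w F = ∑ (-1)^|B|` over the central subfamilies `B` with `⋂ B = F`. For a flat `G`, the
central `B` with `G ⊆ ⋂ B` are exactly the subsets of `{i | G ⊆ H i}`, so `∑_{F ⊇ G} w F` is an
alternating sum over a powerset: it vanishes unless no hyperplane contains `G`, i.e. `G` is the
whole space. Hence `w` satisfies the recursion defining `μ`, which is triangular and so determines
`μ`; grouping the central subfamilies by their intersection turns the right-hand side into
`∑_F w F q^(dim F)`.
-/

open Finset

theorem Finset.eqOn_of_sum_filter_le_eq {α M : Type*} [PartialOrder α] [AddCommGroup M]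
    (s : Finset α) {f g : α → M}
    (h : ∀ G ∈ s, ∑ F ∈ s with G ≤ F, f F = ∑ F ∈ s with G ≤ F, g F) :
    Set.EqOn f g s := by
  -- a maximal `G` with `f G ≠ g G` is the only nonzero term of `∑_{F ≥ G} (f - g) F`
  by_contra hfg
  obtain ⟨x, hxs, hx⟩ : ∃ x ∈ s, f x ≠ g x := by simpa [Set.EqOn] using hfg
  obtain ⟨G, hGmax⟩ := (s.filter fun F => f F ≠ g F).exists_maximal ⟨x, by simp [hxs, hx]⟩
  obtain ⟨hGs, hG⟩ := mem_filter.1 hGmax.prop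
  have hsum : ∑ F ∈ s with G ≤ F, (f F - g F) = f G - g G :=
    sum_eq_single_of_mem G (by simp [hGs]) fun F hF hFG => by
      obtain ⟨hFs, hGF⟩ := mem_filter.1 hF
      by_contra hne
      exact hFG (hGmax.eq_of_le (by simp [hFs, sub_ne_zero.1 hne]) hGF).symm
  rw [sum_sub_distrib, h G hGs, sub_self] at hsum
  exact hG (sub_eq_zero.1 hsum.symm)

theorem LinearMap.setOf_apply_eq_ne_univ {K V : Type*} [Field K] [AddCommGroup V] [Module K V]
    {l : V →ₗ[K] K} (hl : l ≠ 0) (c : K) : {x | l x = c} ≠ Set.univ := by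
  intro h
  have hc : c = 0 := by simpa using (Set.eq_univ_iff_forall.1 h 0).symm
  exact hl (LinearMap.ext fun x => by simpa [hc] using Set.eq_univ_iff_forall.1 h x)

noncomputable section

namespace Arrangement

variable {E I : Type*} [Fintype I] (H : I → Set E)

def centralSubfamilies : Finset (Finset I) := {B | (⋂ i ∈ B, H i).Nonempty}

def flatsOf : Finset (Set E) := (centralSubfamilies H).image fun B => ⋂ i ∈ B, H i

def flatSign (F : Set E) : ℤ := ∑ B ∈ centralSubfamilies H with ⋂ i ∈ B, H i = F, (-1) ^ #B

variable {H}

theorem mem_flatsOf {F : Set E} :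
    F ∈ flatsOf H ↔ ∃ B : Finset I, (⋂ i ∈ B, H i).Nonempty ∧ F = ⋂ i ∈ B, H i := by
  simp [flatsOf, centralSubfamilies, eq_comm]

theorem nonempty_of_mem_flatsOf {F : Set E} (hF : F ∈ flatsOf H) : F.Nonempty := by
  obtain ⟨B, hB, rfl⟩ := mem_flatsOf.1 hF
  exact hB

theorem sum_flatsOf_flatSign_smul {M : Type*} [AddCommGroup M] (φ : Set E → M) :
    ∑ F ∈ flatsOf H, flatSign H F • φ F
      = ∑ B ∈ centralSubfamilies H, (-1 : ℤ) ^ #B • φ (⋂ i ∈ B, H i) := by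
  rw [← sum_fiberwise_of_maps_to (t := flatsOf H) fun B hB => mem_image_of_mem _ hB]
  refine sum_congr rfl fun F _ => ?_
  rw [flatSign, sum_smul]
  exact sum_congr rfl fun B hB => by rw [(mem_filter.1 hB).2]

theorem centralSubfamilies_filter_superset {G : Set E} (hG : G.Nonempty) :
    {B ∈ centralSubfamilies H | G ⊆ ⋂ i ∈ B, H i} = ({i | G ⊆ H i} : Finset I).powerset := by
  ext B
  simp only [centralSubfamilies, mem_filter, mem_univ, true_and, mem_powerset, Finset.subset_iff,
    Set.subset_iInter_iff]
  exact ⟨fun h => h.2, fun h => ⟨hG.mono (Set.subset_iInter₂ h), h⟩⟩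

theorem filter_superset_eq_empty_iff {G : Set E} (hG : G ∈ flatsOf H)
    (hH : ∀ i, H i ≠ Set.univ) : ({i | G ⊆ H i} : Finset I) = ∅ ↔ G = Set.univ := by
  obtain ⟨B, -, rfl⟩ := mem_flatsOf.1 hG
  simp only [filter_eq_empty_iff, mem_univ, true_implies]
  constructor
  · intro h
    have : B = ∅ := eq_empty_of_forall_notMem fun i hi => h (Set.biInter_subset_of_mem hi)
    simp [this]
  · intro h i hi
    exact hH i (Set.univ_subset_iff.1 (h ▸ hi))

theorem sum_flatSign_filter_superset {G : Set E} (hG : G ∈ flatsOf H)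
    (hH : ∀ i, H i ≠ Set.univ) :
    ∑ F ∈ flatsOf H with G ⊆ F, flatSign H F = if G = Set.univ then 1 else 0 := by
  have := sum_flatsOf_flatSign_smul (H := H) fun F => if G ⊆ F then (1 : ℤ) else 0
  simp only [smul_eq_mul, mul_ite, mul_one, mul_zero, ← sum_filter] at this
  rw [this, centralSubfamilies_filter_superset (nonempty_of_mem_flatsOf hG),
    sum_powerset_neg_one_pow_card]
  exact if_congr (filter_superset_eq_empty_iff hG hH) rfl rfl

end Arrangement

end

/-- **Whitney's theorem.** Let `𝒜 = (H i)` be a hyperplane arrangement in `K^d`.  Let `flats`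
be the finite set of flats (nonempty intersections of central subfamilies, including `K^d`
itself coming from the empty subfamily), and let `μ` be the Möbius function of the poset of
flats ordered by reverse inclusion, i.e. `Σ_{F ≤ G} μ F` is `1` if `G = K^d` and `0` otherwise.
Then `Σ_{F flat} μ(F) q^(dim F) = Σ_{B central} (-1)^|B| q^(d - r B)` in `ℤ[q]`. -/
theorem whitney_theorem
    {K : Type} [Field K] {d : ℕ} {I : Type} [Fintype I]
    (l : I → ((Fin d → K) →ₗ[K] K)) (hl : ∀ i, l i ≠ 0) (b : I → K)
    (H : I → Set (Fin d → K)) (hH : ∀ i, H i = {x | l i x = b i})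
    (flats : Finset (Set (Fin d → K)))
    (hflats : ∀ Fl : Set (Fin d → K),
      Fl ∈ flats ↔ ∃ B : Finset I, (⋂ i ∈ B, H i).Nonempty ∧ Fl = ⋂ i ∈ B, H i)
    (μ : Set (Fin d → K) → ℤ)
    (hμ : ∀ G ∈ flats,
      ∑ Fl ∈ flats.filter (fun Fl => G ⊆ Fl), μ Fl = if G = Set.univ then 1 else 0) :
    ∑ Fl ∈ flats,
        Polynomial.C (μ Fl) * (X : Polynomial ℤ) ^ Module.finrank K ↥((affineSpan K Fl).direction)
      = ∑ B : Finset I,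
          if (⋂ i ∈ B, H i).Nonempty then
            (-1 : Polynomial ℤ) ^ B.card *
              (X : Polynomial ℤ) ^
                (d - (d - Module.finrank K ↥((affineSpan K (⋂ i ∈ B, H i)).direction)))
          else 0 := by
  have hflats_eq : flats = Arrangement.flatsOf H := by
    ext F
    rw [hflats, Arrangement.mem_flatsOf]
  subst hflats_eq
  have hμ_eq : Set.EqOn (Arrangement.flatSign H) μ (Arrangement.flatsOf H) :=
    Finset.eqOn_of_sum_filter_le_eq _ fun G hG => by
      rw [hμ G hG]
      exact Arrangement.sum_flatSign_filter_superset hG fun i =>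
        hH i ▸ (l i).setOf_apply_eq_ne_univ (hl i) (b i)
  have hdim : ∀ F : Set (Fin d → K),
      Module.finrank K (affineSpan K F).direction ≤ d := fun F =>
    (Submodule.finrank_le _).trans_eq (Module.finrank_fin_fun K)
  calc _ = ∑ F ∈ Arrangement.flatsOf H,
        Arrangement.flatSign H F • (X : ℤ[X]) ^ Module.finrank K (affineSpan K F).direction :=
        sum_congr rfl fun F hF => by rw [← hμ_eq hF, C_mul']
    _ = _ := by
      rw [Arrangement.sum_flatsOf_flatSign_smul, Arrangement.centralSubfamilies, sum_filter]
      refine sum_congr rfl fun B _ => ?_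
      rw [Nat.sub_sub_self (hdim _), zsmul_eq_mul, Int.cast_pow, Int.cast_neg, Int.cast_one]
end

section
/- (Zaslavsky's theorem, region count.) Let 𝒜 = (H_i)_{i∈I} be a hyperplane arrangement in ℝ^d. Then the complement ℝ^d ∖ ⋃_{i∈I} H_i has finitely many connected components, and their number equals Σ_{ℬ ⊆ I central} (−1)^{|ℬ|−r(ℬ)}, which equals (−1)^d χ(𝒜; −1). -/
/-!
Both sides satisfy the same deletion–restriction recursion, in the relative setting of an affine
subspace `W` and a finite set `J` of hyperplanes. Adding a hyperplane `H ⊉ W` to `J` adds the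
count for the restricted arrangement on `W ∩ H`, and adding one with `H ⊇ W` makes both counts
vanish. For the regions this is because the regions of `W ∖ ⋃_J H_j` are the nonempty cells of
sign vectors; a cell is convex and open in `W`, so `H` cuts it into two regions if it meets it
and leaves it whole otherwise, and the cells meeting `H` are the regions of `W ∩ H`.
-/

open Module Finset Topology

section LevelSet

variable {k V : Type*} [Field k] [AddCommGroup V] [Module k V]

def levelSet (f : V →ₗ[k] k) (c : k) : AffineSubspace k V where
  carrier := {x | f x = c}
  smul_vsub_vadd_mem' t p₁ p₂ p₃ h₁ h₂ h₃ := by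
    simp_all [vsub_eq_sub, vadd_eq_add]

@[simp]
theorem mem_levelSet {f : V →ₗ[k] k} {c : k} {x : V} : x ∈ levelSet f c ↔ f x = c := Iff.rfl

theorem direction_levelSet {f : V →ₗ[k] k} {c : k} {p : V} (hp : p ∈ levelSet f c) :
    (levelSet f c).direction = LinearMap.ker f := by
  ext v
  rw [AffineSubspace.mem_direction_iff_eq_vsub ⟨p, hp⟩]
  constructor
  · rintro ⟨p₁, hp₁, p₂, hp₂, rfl⟩
    simp_all [vsub_eq_sub]
  · intro hv
    exact ⟨v + p, by simp_all, p, hp, by simp [vsub_eq_sub]⟩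

theorem Submodule.finrank_le_finrank_inf_ker_add_one [FiniteDimensional k V] (s : Submodule k V)
    (f : V →ₗ[k] k) : finrank k s ≤ finrank k ↥(s ⊓ LinearMap.ker f) + 1 := by
  have h₁ := Submodule.finrank_sup_add_finrank_inf_eq s (LinearMap.ker f)
  have h₂ := (s ⊔ LinearMap.ker f).finrank_le
  have h₃ := f.finrank_range_add_finrank_ker
  have h₄ : finrank k (LinearMap.range f) ≤ 1 := by
    simpa using (LinearMap.range f).finrank_le
  omega

variable [FiniteDimensional k V] {W : AffineSubspace k V} {f : V →ₗ[k] k} {c : k}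

theorem finrank_direction_le_inf_levelSet_add_one (h : W ⊓ levelSet f c ≠ ⊥) :
    finrank k W.direction ≤ finrank k (W ⊓ levelSet f c).direction + 1 := by
  obtain ⟨p, hpW, hpL⟩ := (AffineSubspace.nonempty_iff_ne_bot _).2 h
  rw [AffineSubspace.direction_inf_of_mem hpW hpL, direction_levelSet hpL]
  exact W.direction.finrank_le_finrank_inf_ker_add_one f

theorem finrank_direction_inf_levelSet_add_one (h : W ⊓ levelSet f c ≠ ⊥)
    (hW : ¬ W ≤ levelSet f c) :
    finrank k (W ⊓ levelSet f c).direction + 1 = finrank k W.direction := by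
  obtain ⟨p, hp⟩ := (AffineSubspace.nonempty_iff_ne_bot _).2 h
  have hlt : (W ⊓ levelSet f c).direction < W.direction := by
    refine (AffineSubspace.direction_le inf_le_left).lt_of_ne fun heq ↦ hW ?_
    rw [← (AffineSubspace.eq_iff_direction_eq_of_mem hp hp.1).2 heq]
    exact inf_le_right
  have := Submodule.finrank_lt_finrank_of_lt hlt
  have := finrank_direction_le_inf_levelSet_add_one h
  omega

end LevelSet

section Whitney

variable {k V I : Type*} [Field k] [AddCommGroup V] [Module k V]
  (l : I → V →ₗ[k] k) (b : I → k)

def flat (B : Finset I) : AffineSubspace k V := ⨅ i ∈ B, levelSet (l i) (b i)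

theorem coe_flat (B : Finset I) : (flat l b B : Set V) = ⋂ i ∈ B, {x | l i x = b i} := by
  ext x
  simp [flat]

@[simp]
theorem inf_flat_empty (W : AffineSubspace k V) : W ⊓ flat l b ∅ = W := by
  simp [flat]

-- With `r := dim W - dim (W ⊓ flat B)` the rank of `B` relative to `W`, the sign `(-1) ^ (#B + r)`
-- equals `(-1) ^ (#B - r)` because `r ≤ #B`, and avoids truncated subtraction.
open scoped Classical in
noncomputable def whitneySum (J : Finset I) (W : AffineSubspace k V) : ℤ :=
  ∑ B ∈ J.powerset, if W ⊓ flat l b B = ⊥ then 0 else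
    (-1) ^ (#B + (finrank k W.direction - finrank k (W ⊓ flat l b B).direction))

theorem whitneySum_empty {W : AffineSubspace k V} (hW : W ≠ ⊥) : whitneySum l b ∅ W = 1 := by
  rw [whitneySum, powerset_empty, sum_singleton, inf_flat_empty, if_neg hW]
  simp

theorem whitneySum_bot (J : Finset I) : whitneySum l b J ⊥ = 0 := by
  simp [whitneySum]

open scoped Classical in
theorem whitneySum_top (J : Finset I) :
    whitneySum l b J ⊤ = ∑ B ∈ J.powerset, if flat l b B ≠ ⊥ then
      (-1) ^ (#B + (finrank k V - finrank k (flat l b B).direction)) else 0 := by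
  refine sum_congr rfl fun B _ ↦ ?_
  rw [top_inf_eq, AffineSubspace.direction_top, finrank_top, ite_not]

variable [DecidableEq I]

theorem inf_flat_insert (W : AffineSubspace k V) (i : I) (B : Finset I) :
    W ⊓ flat l b (insert i B) = W ⊓ levelSet (l i) (b i) ⊓ flat l b B := by
  rw [flat, Finset.iInf_insert, inf_assoc, flat]

variable {J : Finset I} {i : I} {W : AffineSubspace k V}

theorem whitneySum_insert_of_le (hi : i ∉ J) (hW : W ≤ levelSet (l i) (b i)) :
    whitneySum l b (insert i J) W = 0 := by
  rw [whitneySum, sum_powerset_insert hi, ← sum_add_distrib]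
  refine sum_eq_zero fun B hB ↦ ?_
  have hiB : i ∉ B := fun h ↦ hi (mem_powerset.1 hB h)
  rw [inf_flat_insert, inf_eq_left.2 hW, card_insert_of_notMem hiB, add_right_comm, pow_succ]
  split_ifs <;> ring

variable [FiniteDimensional k V]

theorem finrank_direction_le_inf_flat_add_card {B : Finset I} (h : W ⊓ flat l b B ≠ ⊥) :
    finrank k W.direction ≤ finrank k (W ⊓ flat l b B).direction + #B := by
  induction B using Finset.induction generalizing W with
  | empty => rw [inf_flat_empty]; omega
  | insert i B hi ih =>
    rw [inf_flat_insert] at h ⊢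
    have hW : W ⊓ levelSet (l i) (b i) ≠ ⊥ := fun h' ↦ h (by rw [h', bot_inf_eq])
    have := finrank_direction_le_inf_levelSet_add_one hW
    have := ih h
    rw [card_insert_of_notMem hi]
    omega

theorem finrank_sub_finrank_direction_flat_le_card {B : Finset I} (h : flat l b B ≠ ⊥) :
    finrank k V - finrank k (flat l b B).direction ≤ #B := by
  have := finrank_direction_le_inf_flat_add_card l b (W := ⊤) (by rwa [top_inf_eq])
  rw [top_inf_eq, AffineSubspace.direction_top, finrank_top] at this
  omega

theorem whitneySum_insert (hi : i ∉ J) (hW : ¬ W ≤ levelSet (l i) (b i)) :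
    whitneySum l b (insert i J) W =
      whitneySum l b J W + whitneySum l b J (W ⊓ levelSet (l i) (b i)) := by
  rw [whitneySum, sum_powerset_insert hi]
  congr 1
  refine sum_congr rfl fun B hB ↦ ?_
  have hiB : i ∉ B := fun h ↦ hi (mem_powerset.1 hB h)
  rw [inf_flat_insert]
  split_ifs with h
  · rfl
  have hWL : W ⊓ levelSet (l i) (b i) ≠ ⊥ := fun h' ↦ h (by rw [h', bot_inf_eq])
  have hcodim := finrank_direction_inf_levelSet_add_one hWL hW
  have hle := Submodule.finrank_mono
    (AffineSubspace.direction_le (inf_le_left : W ⊓ levelSet (l i) (b i) ⊓ flat l b B ≤ _))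
  set m := finrank k (W ⊓ levelSet (l i) (b i)).direction
  set n := finrank k (W ⊓ levelSet (l i) (b i) ⊓ flat l b B).direction
  rw [card_insert_of_notMem hiB, ← hcodim, show #B + 1 + (m + 1 - n) = #B + (m - n) + 2 by omega,
    pow_add]
  norm_num

end Whitney

noncomputable def IsLocallyConstant.connectedComponentsEquivRange {X Y : Type*}
    [TopologicalSpace X] {f : X → Y} (hf : IsLocallyConstant f)
    (hfib : ∀ x, IsPreconnected (f ⁻¹' {f x})) : ConnectedComponents X ≃ Set.range f :=
  Equiv.ofBijective
    (Quotient.lift (fun x ↦ ⟨f x, x, rfl⟩) fun x _ (hxy : connectedComponent x = _) ↦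
      Subtype.ext <| hf.apply_eq_of_isPreconnected isPreconnected_connectedComponent
        mem_connectedComponent (hxy ▸ mem_connectedComponent))
    ⟨fun a a' ↦ Quotient.inductionOn₂ a a' fun x _ hxy ↦
      ConnectedComponents.coe_eq_coe.2 <| connectedComponent_eq <|
        (hfib x).subset_connectedComponent rfl (Subtype.ext_iff.1 hxy).symm,
    fun ⟨_, x, hx⟩ ↦ ⟨ConnectedComponents.mk x, Subtype.ext hx⟩⟩

section Regions

variable {V I : Type*} [NormedAddCommGroup V] [NormedSpace ℝ V]

theorem exists_lt_and_gt_of_mem_inter {W : AffineSubspace ℝ V} {O : Set V} (hO : IsOpen O)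
    {x : V} (hxW : x ∈ W) (hxO : x ∈ O) {f : V →ₗ[ℝ] ℝ} {c : ℝ}
    (hW : ¬ W ≤ levelSet f c) (hx : f x = c) :
    (∃ y ∈ (W : Set V) ∩ O, f y < c) ∧ ∃ z ∈ (W : Set V) ∩ O, c < f z := by
  obtain ⟨w, hwW, hw⟩ := Set.not_subset.1 hW
  set v := w - x
  have hv : f v ≠ 0 := by simpa [v, hx, sub_eq_zero] using hw
  have hline : ∀ t : ℝ, x + t • v ∈ W := fun t ↦ by
    simpa [vadd_eq_add, add_comm] using AffineSubspace.vadd_mem_of_mem_direction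
      (W.direction.smul_mem t (W.vsub_mem_direction hwW hxW)) hxW
  have hval : ∀ t : ℝ, f (x + t • v) = c + t * f v := fun t ↦ by simp [hx]
  have hnear : ∀ᶠ t in 𝓝[≠] (0 : ℝ), x + t • v ∈ O ∧ x + (-t) • v ∈ O := by
    refine Filter.Eventually.filter_mono nhdsWithin_le_nhds (Filter.Eventually.and ?_ ?_) <;>
      refine ContinuousAt.preimage_mem_nhds (by fun_prop) (by simpa using hO.mem_nhds hxO)
  obtain ⟨t, ⟨htO, htO'⟩, ht⟩ := (hnear.and self_mem_nhdsWithin).exists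
  have htv : t * f v ≠ 0 := mul_ne_zero ht hv
  rcases htv.lt_or_gt with hneg | hpos
  · exact ⟨⟨_, ⟨hline t, htO⟩, by rw [hval]; linarith⟩,
      ⟨_, ⟨hline (-t), htO'⟩, by rw [hval]; linarith⟩⟩
  · exact ⟨⟨_, ⟨hline (-t), htO'⟩, by rw [hval]; linarith⟩,
      ⟨_, ⟨hline t, htO⟩, by rw [hval]; linarith⟩⟩

variable (l : I → V →ₗ[ℝ] ℝ) (b : I → ℝ)

def complementIn (J : Finset I) (W : AffineSubspace ℝ V) : Set V :=
  {x | x ∈ W ∧ ∀ i ∈ J, l i x ≠ b i}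

def openCell (J : Finset I) (σ : I → Bool) : Set V :=
  {x | ∀ i ∈ J, if σ i then b i < l i x else l i x < b i}

-- Coordinates outside `J` are fixed to `false`, so that only the hyperplanes of `J` separate points.
open scoped Classical in
noncomputable def signs (J : Finset I) (x : V) : I → Bool :=
  fun i ↦ decide (i ∈ J ∧ b i < l i x)

noncomputable def regionCount (J : Finset I) (W : AffineSubspace ℝ V) : ℕ :=
  (signs l b J '' complementIn l b J W).ncard

variable {l b} {J : Finset I} {W : AffineSubspace ℝ V}

theorem isOpen_openCell [FiniteDimensional ℝ V] (σ : I → Bool) :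
    IsOpen (openCell l b J σ) := by
  simp only [openCell, Set.ofPred_forall]
  refine isOpen_biInter_finset fun i _ ↦ ?_
  have := (l i).continuous_of_finiteDimensional
  cases σ i
  · exact isOpen_lt this continuous_const
  · exact isOpen_lt continuous_const this

theorem complementIn_inter_openCell (σ : I → Bool) :
    complementIn l b J W ∩ openCell l b J σ = (W : Set V) ∩ openCell l b J σ := by
  refine Set.ext fun x ↦
    ⟨fun ⟨⟨hxW, _⟩, hx⟩ ↦ ⟨hxW, hx⟩, fun ⟨hxW, hx⟩ ↦ ⟨⟨hxW, fun i hi ↦ ?_⟩, hx⟩⟩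
  have := hx i hi
  split_ifs at this
  · exact this.ne'
  · exact this.ne

theorem convex_complementIn_inter_openCell (σ : I → Bool) :
    Convex ℝ (complementIn l b J W ∩ openCell l b J σ) := by
  rw [complementIn_inter_openCell]
  refine W.convex.inter ?_
  simp only [openCell, Set.ofPred_forall]
  refine convex_iInter₂ fun i _ ↦ ?_
  cases σ i
  · exact convex_halfSpace_lt (l i).isLinear _
  · exact convex_halfSpace_gt (l i).isLinear _

theorem signs_eq_signs_iff {x : V} (hx : x ∈ complementIn l b J W) (y : V) :
    signs l b J x = signs l b J y ↔ x ∈ openCell l b J (signs l b J y) := by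
  simp only [funext_iff, openCell, signs, Set.mem_ofPred_eq, decide_eq_decide,
    and_congr_right_iff]
  refine forall₂_congr fun i hi ↦ ?_
  have := hx.2 i hi
  by_cases hy : b i < l i y
  · simp [hi, hy]
  · simp only [hi, hy, true_and, decide_false, iff_false, not_lt, Bool.false_eq_true, if_false]
    exact ⟨fun h ↦ lt_of_le_of_ne h this, le_of_lt⟩

theorem signs_apply_of_notMem {i : I} (hi : i ∉ J) (x : V) : signs l b J x i = false := by
  simp [signs, hi]

theorem signs_insert [DecidableEq I] {i : I} (hi : i ∉ J) (x : V) :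
    signs l b (insert i J) x = Function.update (signs l b J x) i (decide (b i < l i x)) := by
  ext j
  rcases eq_or_ne j i with rfl | hj
  · simp [signs]
  · simp [signs, hj]

theorem regionCount_empty (hW : W ≠ ⊥) : regionCount l b (∅ : Finset I) W = 1 := by
  have hconst : signs l b (∅ : Finset I) = fun _ _ ↦ false := by
    ext x i
    exact signs_apply_of_notMem (Finset.notMem_empty i) x
  have hne : (complementIn l b (∅ : Finset I) W).Nonempty := by
    simpa [complementIn] using (AffineSubspace.nonempty_iff_ne_bot W).2 hW
  rw [regionCount, hconst, hne.image_const, Set.ncard_singleton]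

theorem regionCount_bot (J : Finset I) : regionCount l b J (⊥ : AffineSubspace ℝ V) = 0 := by
  simp [regionCount, complementIn, AffineSubspace.notMem_bot]

theorem regionCount_insert_of_le [DecidableEq I] {i : I}
    (hW : W ≤ levelSet (l i) (b i)) : regionCount l b (insert i J) W = 0 := by
  have : complementIn l b (insert i J) W = ∅ :=
    Set.eq_empty_of_forall_notMem fun x hx ↦ hx.2 i (mem_insert_self i J) (hW hx.1)
  simp [regionCount, this]

theorem regionCount_insert_eq_add [Finite I] [DecidableEq I] {i : I} (hi : i ∉ J) :
    regionCount l b (insert i J) W =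
      (signs l b J '' (complementIn l b J W ∩ {x | b i < l i x})).ncard +
        (signs l b J '' (complementIn l b J W ∩ {x | l i x < b i})).ncard := by
  set S := complementIn l b J W
  set P := signs l b J '' (S ∩ {x | b i < l i x})
  set N := signs l b J '' (S ∩ {x | l i x < b i})
  have hsplit :
      complementIn l b (insert i J) W = S ∩ {x | b i < l i x} ∪ S ∩ {x | l i x < b i} := by
    ext x
    simp only [S, complementIn, forall_mem_insert, ne_iff_lt_or_gt, Set.mem_union,
      Set.mem_inter_iff, Set.mem_ofPred_eq]
    tauto
  have hP :
      signs l b (insert i J) '' (S ∩ {x | b i < l i x}) = (Function.update · i true) '' P := by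
    rw [Set.image_image]
    exact Set.image_congr fun x hx ↦ by
      rw [signs_insert hi, decide_eq_true (show b i < l i x from hx.2)]
  have hN : signs l b (insert i J) '' (S ∩ {x | l i x < b i}) = N :=
    Set.image_congr fun x hx ↦ by
      rw [signs_insert hi, decide_eq_false hx.2.not_gt, Function.update_eq_self_iff,
        signs_apply_of_notMem hi]
  have hinj : Set.InjOn (Function.update · i true) P := by
    rintro _ ⟨x, -, rfl⟩ _ ⟨y, -, rfl⟩ h
    ext j
    rcases eq_or_ne j i with rfl | hj
    · rw [signs_apply_of_notMem hi, signs_apply_of_notMem hi]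
    · simpa [hj] using congrFun h j
  have hdisj : Disjoint ((Function.update · i true) '' P) N := by
    rw [Set.disjoint_left]
    rintro _ ⟨_, -, rfl⟩ ⟨y, -, hy⟩
    simpa [signs_apply_of_notMem hi] using congrFun hy i
  rw [regionCount, hsplit, Set.image_union, hP, hN, Set.ncard_union_eq hdisj, hinj.ncard_image]

theorem isPreconnected_preimage_domRestrict_signs (y : complementIn l b J W) :
    IsPreconnected ((complementIn l b J W).domRestrict (signs l b J) ⁻¹'
      {(complementIn l b J W).domRestrict (signs l b J) y}) := by
  have : (complementIn l b J W).domRestrict (signs l b J) ⁻¹'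
      {(complementIn l b J W).domRestrict (signs l b J) y} =
        Subtype.val ⁻¹' openCell l b J (signs l b J y) :=
    Set.ext fun x ↦ signs_eq_signs_iff x.2 y
  rw [this, ← Topology.IsInducing.subtypeVal.isPreconnected_image, Subtype.image_preimage_coe]
  exact (convex_complementIn_inter_openCell _).isPreconnected

variable [FiniteDimensional ℝ V]

theorem isLocallyConstant_domRestrict_signs :
    IsLocallyConstant ((complementIn l b J W).domRestrict (signs l b J)) :=
  (IsLocallyConstant.iff_exists_open _).2 fun y ↦
    ⟨Subtype.val ⁻¹' openCell l b J (signs l b J y),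
      (isOpen_openCell _).preimage continuous_subtype_val, (signs_eq_signs_iff y.2 y).1 rfl,
      fun x hx ↦ (signs_eq_signs_iff x.2 y).2 hx⟩

noncomputable def connectedComponentsEquivSigns :
    ConnectedComponents (complementIn l b J W) ≃ signs l b J '' complementIn l b J W :=
  (isLocallyConstant_domRestrict_signs.connectedComponentsEquivRange
    isPreconnected_preimage_domRestrict_signs).trans (Equiv.setCongr (Set.range_domRestrict _ _))

theorem finite_connectedComponents_complementIn [Finite I] :
    Finite (ConnectedComponents (complementIn l b J W)) :=
  .of_equiv _ connectedComponentsEquivSigns.symm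

theorem card_connectedComponents_complementIn :
    Nat.card (ConnectedComponents (complementIn l b J W)) = regionCount l b J W :=
  Nat.card_congr connectedComponentsEquivSigns

theorem exists_signs_eq_lt_and_gt {i : I} (hW : ¬ W ≤ levelSet (l i) (b i)) {x : V}
    (hx : x ∈ complementIn l b J W) (hxi : l i x = b i) :
    (∃ y ∈ complementIn l b J W, signs l b J y = signs l b J x ∧ l i y < b i) ∧
      ∃ z ∈ complementIn l b J W, signs l b J z = signs l b J x ∧ b i < l i z := by
  have hcell : ∀ y ∈ (W : Set V) ∩ openCell l b J (signs l b J x),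
      y ∈ complementIn l b J W ∧ signs l b J y = signs l b J x := fun y hy ↦ by
    rw [← complementIn_inter_openCell] at hy
    exact ⟨hy.1, (signs_eq_signs_iff hy.1 x).2 hy.2⟩
  obtain ⟨⟨y, hy, hyi⟩, z, hz, hzi⟩ := exists_lt_and_gt_of_mem_inter (isOpen_openCell _) hx.1
    ((signs_eq_signs_iff hx x).1 rfl) hW hxi
  exact ⟨⟨y, (hcell y hy).1, (hcell y hy).2, hyi⟩, z, (hcell z hz).1, (hcell z hz).2, hzi⟩

theorem exists_signs_eq_of_lt_of_lt {i : I} {y z : V} (hy : y ∈ complementIn l b J W)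
    (hz : z ∈ complementIn l b J W) (hyz : signs l b J y = signs l b J z) (hyi : l i y < b i)
    (hzi : b i < l i z) :
    ∃ x ∈ complementIn l b J W, signs l b J x = signs l b J y ∧ l i x = b i := by
  have hyC : y ∈ complementIn l b J W ∩ openCell l b J (signs l b J y) :=
    ⟨hy, (signs_eq_signs_iff hy y).1 rfl⟩
  have hzC : z ∈ complementIn l b J W ∩ openCell l b J (signs l b J y) :=
    ⟨hz, (signs_eq_signs_iff hz y).1 hyz.symm⟩
  obtain ⟨x, hxC, hxi⟩ := (convex_complementIn_inter_openCell _).isPreconnected.intermediate_value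
    hyC hzC (l i).continuous_of_finiteDimensional.continuousOn ⟨hyi.le, hzi.le⟩
  exact ⟨x, hxC.1, (signs_eq_signs_iff hxC.1 y).2 hxC.2, hxi⟩

theorem regionCount_insert [Finite I] [DecidableEq I] {i : I} (hi : i ∉ J)
    (hW : ¬ W ≤ levelSet (l i) (b i)) :
    regionCount l b (insert i J) W =
      regionCount l b J W + regionCount l b J (W ⊓ levelSet (l i) (b i)) := by
  set S := complementIn l b J W
  set P := signs l b J '' (S ∩ {x | b i < l i x})
  set N := signs l b J '' (S ∩ {x | l i x < b i})
  have hunion : P ∪ N = signs l b J '' S := by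
    refine subset_antisymm (Set.union_subset (Set.image_mono Set.inter_subset_left)
      (Set.image_mono Set.inter_subset_left)) ?_
    rintro _ ⟨x, hx, rfl⟩
    rcases lt_trichotomy (l i x) (b i) with hlt | heq | hgt
    · exact Or.inr ⟨x, ⟨hx, hlt⟩, rfl⟩
    · obtain ⟨⟨y, hy, hyx, hyi⟩, -⟩ := exists_signs_eq_lt_and_gt hW hx heq
      exact Or.inr ⟨y, ⟨hy, hyi⟩, hyx⟩
    · exact Or.inl ⟨x, ⟨hx, hgt⟩, rfl⟩
  have hinter : P ∩ N = signs l b J '' complementIn l b J (W ⊓ levelSet (l i) (b i)) := by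
    ext σ
    constructor
    · rintro ⟨⟨z, ⟨hz, hzi⟩, rfl⟩, y, ⟨hy, hyi⟩, hyz⟩
      obtain ⟨x, hx, hxy, hxi⟩ := exists_signs_eq_of_lt_of_lt hy hz hyz hyi hzi
      exact ⟨x, ⟨⟨hx.1, hxi⟩, hx.2⟩, hxy.trans hyz⟩
    · rintro ⟨x, ⟨⟨hxW, hxi⟩, hxJ⟩, rfl⟩
      obtain ⟨⟨y, hy, hyx, hyi⟩, z, hz, hzx, hzi⟩ := exists_signs_eq_lt_and_gt hW ⟨hxW, hxJ⟩ hxi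
      exact ⟨⟨z, ⟨hz, hzi⟩, hzx⟩, y, ⟨hy, hyi⟩, hyx⟩
  rw [regionCount_insert_eq_add hi, ← Set.ncard_union_add_ncard_inter, hunion, hinter]
  rfl

theorem regionCount_eq_whitneySum [Finite I] (J : Finset I) (hW : W ≠ ⊥) :
    (regionCount l b J W : ℤ) = whitneySum l b J W := by
  classical
  induction J using Finset.induction generalizing W with
  | empty => rw [regionCount_empty hW, whitneySum_empty l b hW, Nat.cast_one]
  | insert i J hi ih =>
    by_cases hWi : W ≤ levelSet (l i) (b i)
    · rw [regionCount_insert_of_le hWi, whitneySum_insert_of_le l b hi hWi, Nat.cast_zero]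
    rw [regionCount_insert hi hWi, whitneySum_insert l b hi hWi, Nat.cast_add, ih hW]
    by_cases hbot : W ⊓ levelSet (l i) (b i) = ⊥
    · rw [hbot, regionCount_bot, whitneySum_bot, Nat.cast_zero]
    · rw [ih hbot]

end Regions

open scoped Classical

theorem zaslavsky_regions_general
    {d : ℕ} {I : Type} [Fintype I]
    (l : I → ((Fin d → ℝ) →ₗ[ℝ] ℝ)) (b : I → ℝ)
    (H : I → Set (Fin d → ℝ)) (hH : ∀ i, H i = {x | l i x = b i}) :
    Finite (ConnectedComponents ↥((⋃ i, H i)ᶜ)) ∧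
    (Nat.card (ConnectedComponents ↥((⋃ i, H i)ᶜ)) : ℤ)
      = (∑ B : Finset I,
          if (⋂ i ∈ B, H i).Nonempty then
            (-1 : ℤ) ^
              (B.card - (d - Module.finrank ℝ ↥((affineSpan ℝ (⋂ i ∈ B, H i)).direction)))
          else 0) ∧
    (Nat.card (ConnectedComponents ↥((⋃ i, H i)ᶜ)) : ℤ)
      = (-1) ^ d *
          ∑ B : Finset I,
            if (⋂ i ∈ B, H i).Nonempty then
              (-1 : ℤ) ^ B.card *
                (-1 : ℤ) ^
                  (d - (d - Module.finrank ℝ ↥((affineSpan ℝ (⋂ i ∈ B, H i)).direction)))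
            else 0 := by
  obtain rfl : H = fun i ↦ {x | l i x = b i} := funext hH
  have hcompl : (⋃ i, {x : Fin d → ℝ | l i x = b i})ᶜ = complementIn l b univ ⊤ := by
    ext x
    simp [complementIn]
  have hcount : (Nat.card (ConnectedComponents (complementIn l b univ ⊤)) : ℤ) =
      whitneySum l b univ ⊤ := by
    rw [card_connectedComponents_complementIn, regionCount_eq_whitneySum _ top_ne_bot]
  rw [hcompl, hcount, whitneySum_top, powerset_univ, finrank_fin_fun, mul_sum]
  refine ⟨finite_connectedComponents_complementIn, sum_congr rfl fun B _ ↦ ?_,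
    sum_congr rfl fun B _ ↦ ?_⟩ <;>
    rw [← coe_flat, AffineSubspace.affineSpan_coe, AffineSubspace.nonempty_iff_ne_bot] <;>
    split_ifs with h
  · have := finrank_sub_finrank_direction_flat_le_card l b h
    rw [finrank_fin_fun] at this
    exact neg_one_pow_congr (by simp only [Nat.even_iff]; omega)
  · rfl
  · rw [← pow_add, ← pow_add]
    exact neg_one_pow_congr (by simp only [Nat.even_iff]; omega)
  · rw [mul_zero]

/-- **Zaslavsky's theorem (region count).** Let `𝒜 = (H i)` be a hyperplane arrangement in
`ℝ^d`.  The complement of `⋃ i, H i` has finitely many connected components, and their number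
equals `Σ_{B central} (-1)^(|B| - r B)`, which in turn equals `(-1)^d χ(𝒜; -1)`. -/
theorem zaslavsky_regions
    {d : ℕ} {I : Type} [Fintype I]
    (l : I → ((Fin d → ℝ) →ₗ[ℝ] ℝ)) (hl : ∀ i, l i ≠ 0) (b : I → ℝ)
    (H : I → Set (Fin d → ℝ)) (hH : ∀ i, H i = {x | l i x = b i}) :
    Finite (ConnectedComponents ↥((⋃ i, H i)ᶜ)) ∧
    (Nat.card (ConnectedComponents ↥((⋃ i, H i)ᶜ)) : ℤ)
      = (∑ B : Finset I,
          if (⋂ i ∈ B, H i).Nonempty then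
            (-1 : ℤ) ^
              (B.card - (d - Module.finrank ℝ ↥((affineSpan ℝ (⋂ i ∈ B, H i)).direction)))
          else 0) ∧
    (Nat.card (ConnectedComponents ↥((⋃ i, H i)ᶜ)) : ℤ)
      = (-1) ^ d *
          ∑ B : Finset I,
            if (⋂ i ∈ B, H i).Nonempty then
              (-1 : ℤ) ^ B.card *
                (-1 : ℤ) ^
                  (d - (d - Module.finrank ℝ ↥((affineSpan ℝ (⋂ i ∈ B, H i)).direction)))
            else 0 :=
  zaslavsky_regions_general l b H hH
end

section
/- (Deletion–contraction recursion for the Tutte polynomial.) Let M be a matroid with finite ground set E and rank function r, and let e ∈ E. Then, in ℤ[x,y]: (1) if e is neither a loop nor a coloop of M, then T(M;x,y) = T(M∖e;x,y) + T(M/e;x,y); (2) if e is a loop, then T(M;x,y) = y · T(M∖e;x,y); (3) if e is a coloop, then T(M;x,y) = x · T(M/e;x,y). -/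
open scoped BigOperators

/-- `r` is the rank function of a matroid: normalized (`r B ≤ |B|`), monotone, submodular. -/
def IsRankFn {α : Type} [DecidableEq α] (r : Finset α → ℕ) : Prop :=
  (∀ B, r B ≤ B.card) ∧ (∀ B C, B ⊆ C → r B ≤ r C) ∧
    (∀ B C, r (B ∪ C) + r (B ∩ C) ≤ r B + r C)

/-- The Tutte polynomial `T(M;x,y) = Σ_{B ⊆ E} (x-1)^(r E - r B) (y-1)^(|B| - r B)` of the
matroid with ground set `E` and rank function `r`, as an element of `ℤ[x,y]`
(`x = X 0`, `y = X 1`). -/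
noncomputable def tuttePoly {α : Type} [DecidableEq α] (E : Finset α) (r : Finset α → ℕ) :
    MvPolynomial (Fin 2) ℤ :=
  ∑ B ∈ E.powerset,
    (MvPolynomial.X 0 - 1) ^ (r E - r B) * (MvPolynomial.X 1 - 1) ^ (B.card - r B)

/- Split the subsets of `E` by whether they contain `e`. When `e` is neither a loop nor a
coloop, the sets `B ∌ e` give the terms of `T(M∖e)` (as `r (E ∖ e) = r E`) and the sets
`B ∪ {e}` those of `T(M/e)` (as `r {e} = 1`). For a loop `r (B ∪ {e}) = r B`, so `B ∪ {e}` has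
one more unit of nullity than `B`; for a coloop submodularity gives `r (B ∪ {e}) = r B + 1`, so
`B` has one more unit of corank than `B ∪ {e}`. -/

open MvPolynomial

namespace IsRankFn

variable {α : Type} [DecidableEq α] {r : Finset α → ℕ}

theorem singleton_le_one (hr : IsRankFn r) (e : α) : r {e} ≤ 1 := by
  simpa using hr.1 {e}

theorem mono (hr : IsRankFn r) {B C : Finset α} (h : B ⊆ C) : r B ≤ r C :=
  hr.2.1 B C h

theorem insert_le (hr : IsRankFn r) (e : α) (B : Finset α) :
    r (insert e B) ≤ r B + r {e} := by
  have h := hr.2.2 B {e}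
  rw [Finset.union_singleton] at h
  omega

theorem insert_eq_of_loop (hr : IsRankFn r) {e : α} (hloop : r {e} = 0) (B : Finset α) :
    r (insert e B) = r B :=
  le_antisymm (by simpa [hloop] using hr.insert_le e B) (hr.mono (Finset.subset_insert e B))

theorem erase_eq_of_not_coloop (hr : IsRankFn r) {E : Finset α} {e : α} (he : e ∈ E)
    (hcoloop : r (E.erase e) + 1 ≠ r E) : r (E.erase e) = r E := by
  have hle := hr.insert_le e (E.erase e)
  rw [Finset.insert_erase he] at hle
  have hge : r (E.erase e) ≤ r E := hr.mono (Finset.erase_subset e E)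
  have := hr.singleton_le_one e
  omega

theorem singleton_eq_one_of_coloop (hr : IsRankFn r) {E : Finset α} {e : α} (he : e ∈ E)
    (hcoloop : r (E.erase e) + 1 = r E) : r {e} = 1 := by
  have hle := hr.insert_le e (E.erase e)
  rw [Finset.insert_erase he] at hle
  have := hr.singleton_le_one e
  omega

theorem insert_eq_of_coloop (hr : IsRankFn r) {E B : Finset α} {e : α} (he : e ∈ E)
    (hcoloop : r (E.erase e) + 1 = r E) (hB : B ⊆ E.erase e) :
    r (insert e B) = r B + 1 := by
  have hsub := hr.2.2 (insert e B) (E.erase e)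
  rw [Finset.insert_union, Finset.union_eq_right.mpr hB, Finset.insert_erase he,
    Finset.insert_inter_of_notMem (Finset.notMem_erase e E), Finset.inter_eq_left.mpr hB]
    at hsub
  have := hr.insert_le e B
  have := hr.singleton_eq_one_of_coloop he hcoloop
  omega

end IsRankFn

section Tutte

variable {α : Type} [DecidableEq α]

noncomputable def tutteTerm (k : ℕ) (r : Finset α → ℕ) (B : Finset α) :
    MvPolynomial (Fin 2) ℤ :=
  (X 0 - 1) ^ (k - r B) * (X 1 - 1) ^ (B.card - r B)

theorem tuttePoly_eq_sum_tutteTerm (E : Finset α) (r : Finset α → ℕ) :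
    tuttePoly E r = ∑ B ∈ E.powerset, tutteTerm (r E) r B :=
  rfl

theorem tuttePoly_eq_sum_add_sum_insert {E : Finset α} (r : Finset α → ℕ) {e : α}
    (he : e ∈ E) :
    tuttePoly E r = ∑ B ∈ (E.erase e).powerset, tutteTerm (r E) r B +
      ∑ B ∈ (E.erase e).powerset, tutteTerm (r E) r (insert e B) := by
  have h := Finset.sum_powerset_insert (Finset.notMem_erase e E) (tutteTerm (r E) r)
  rwa [Finset.insert_erase he] at h

variable {r : Finset α → ℕ}

theorem tutteTerm_contract (hr : IsRankFn r) {e : α} (hone : r {e} = 1) {B : Finset α}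
    (heB : e ∉ B) (k : ℕ) :
    tutteTerm (k - r {e}) (fun C => r (insert e C) - r {e}) B = tutteTerm k r (insert e B) := by
  have hpos : r {e} ≤ r (insert e B) := hr.mono (by simp)
  simp only [tutteTerm, Finset.card_insert_of_notMem heB]
  congr 2 <;> omega

theorem tuttePoly_contract_eq_sum_insert (hr : IsRankFn r) {E : Finset α} {e : α} (he : e ∈ E)
    (hone : r {e} = 1) :
    tuttePoly (E.erase e) (fun C => r (insert e C) - r {e}) =
      ∑ B ∈ (E.erase e).powerset, tutteTerm (r E) r (insert e B) := by
  rw [tuttePoly_eq_sum_tutteTerm, Finset.insert_erase he]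
  refine Finset.sum_congr rfl fun B hB => tutteTerm_contract hr hone ?_ (r E)
  exact fun h => Finset.notMem_erase e E (Finset.mem_powerset.mp hB h)

theorem tutteTerm_insert_of_loop (hr : IsRankFn r) {e : α} (hloop : r {e} = 0) {B : Finset α}
    (heB : e ∉ B) (k : ℕ) :
    tutteTerm k r (insert e B) = (X 1 - 1) * tutteTerm k r B := by
  have hle : r B ≤ B.card := hr.1 B
  rw [tutteTerm, tutteTerm, hr.insert_eq_of_loop hloop, Finset.card_insert_of_notMem heB,
    Nat.sub_add_comm hle, pow_succ]
  ring

theorem tutteTerm_of_coloop (hr : IsRankFn r) {E B : Finset α} {e : α} (he : e ∈ E)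
    (hcoloop : r (E.erase e) + 1 = r E) (hB : B ⊆ E.erase e) :
    tutteTerm (r E) r B = (X 0 - 1) * tutteTerm (r E) r (insert e B) := by
  have hins := hr.insert_eq_of_coloop he hcoloop hB
  have hle : r B ≤ r (E.erase e) := hr.mono hB
  have heB : e ∉ B := fun h => Finset.notMem_erase e E (hB h)
  rw [tutteTerm, tutteTerm, hins, Finset.card_insert_of_notMem heB, Nat.add_sub_add_right,
    show r E - r B = r E - (r B + 1) + 1 by omega, pow_succ]
  ring

end Tutte

/-- **Deletion–contraction recursion for the Tutte polynomial.** Let `M = (E, r)` be a matroid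
and `e ∈ E`.  If `e` is neither a loop (`r {e} = 0`) nor a coloop (`r (E \ e) + 1 = r E`), then
`T(M) = T(M\e) + T(M/e)`; if `e` is a loop then `T(M) = y·T(M\e)`; if `e` is a coloop then
`T(M) = x·T(M/e)`.  Here `M\e` has ground set `E \ {e}` and rank `r`, and `M/e` has ground set
`E \ {e}` and rank `B ↦ r (B ∪ {e}) - r {e}`. -/
theorem tutte_deletion_contraction {α : Type} [DecidableEq α]
    (E : Finset α) (r : Finset α → ℕ) (hr : IsRankFn r) (e : α) (he : e ∈ E) :
    ((r {e} ≠ 0 ∧ r (E.erase e) + 1 ≠ r E) →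
      tuttePoly E r =
        tuttePoly (E.erase e) r +
          tuttePoly (E.erase e) (fun B => r (insert e B) - r {e})) ∧
    (r {e} = 0 →
      tuttePoly E r = MvPolynomial.X 1 * tuttePoly (E.erase e) r) ∧
    (r (E.erase e) + 1 = r E →
      tuttePoly E r =
        MvPolynomial.X 0 * tuttePoly (E.erase e) (fun B => r (insert e B) - r {e})) := by
  have hnotMem : ∀ B ∈ (E.erase e).powerset, e ∉ B :=
    fun B hB h => Finset.notMem_erase e E (Finset.mem_powerset.mp hB h)
  rw [tuttePoly_eq_sum_add_sum_insert r he, tuttePoly_eq_sum_tutteTerm (E.erase e) r]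
  refine ⟨fun ⟨hloop, hcoloop⟩ => ?_, fun hloop => ?_, fun hcoloop => ?_⟩
  · have hone : r {e} = 1 := by have := hr.singleton_le_one e; omega
    rw [tuttePoly_contract_eq_sum_insert hr he hone, hr.erase_eq_of_not_coloop he hcoloop]
  · have hrank : r (E.erase e) = r E := by
      rw [← hr.insert_eq_of_loop hloop, Finset.insert_erase he]
    rw [Finset.sum_congr rfl fun B hB => tutteTerm_insert_of_loop hr hloop (hnotMem B hB) (r E),
      ← Finset.mul_sum, hrank]
    ring
  · rw [Finset.sum_congr rfl fun B hB =>
        tutteTerm_of_coloop hr he hcoloop (Finset.mem_powerset.mp hB),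
      ← Finset.mul_sum, tuttePoly_contract_eq_sum_insert hr he
        (hr.singleton_eq_one_of_coloop he hcoloop)]
    ring
end

section
/- (Basis-activity expansion of the Tutte polynomial.) Let M be a matroid with finite ground set E, rank function r, and rank ρ = r(E), and fix a linear order < on E. For a basis B of M (a subset with |B| = r(B) = ρ), call an element e ∉ B externally active with respect to B if r({f ∈ B : f > e} ∪ {e}) = r({f ∈ B : f > e}), and call an element e ∈ B internally active with respect to B if r((B∖{e}) ∪ {f ∈ E : f < e}) = r(B∖{e}). Let i(B) and e(B) denote the numbers of internally and externally active elements with respect to B. Then T(M;x,y) = Σ_{B basis of M} x^{i(B)} y^{e(B)} in ℤ[x,y]. -/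
open scoped BigOperators

/-! Crapo's interval partition.  For `A ⊆ E`, run the greedy algorithm on `E` listing `A`
decreasingly and then `E \ A` increasingly; the basis `B` it returns is the only basis with
`B \ A` internally and `A \ B` externally active.  Hence `2^E` is partitioned into the intervals
`[B \ IA(B), B ∪ EA(B)]`.  Externally active elements remain spanned after internally active
ones are deleted, so on the interval of `B` we have `r E - r A = |B \ A|` and
`|A| - r A = |A \ B|`, and the sum over the interval factors as
`(∑_{S ⊆ IA(B)} (x-1)^|S|) (∑_{T ⊆ EA(B)} (y-1)^|T|) = x^i(B) y^e(B)`. -/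

open Finset

section RankFunction

variable {α : Type} {r : Finset α → ℕ}

def IsBasis (r : Finset α → ℕ) (E B : Finset α) : Prop :=
  B ⊆ E ∧ #B = r E ∧ r B = r E

theorem IsBasis.rank_eq_card {E B : Finset α} (hB : IsBasis r E B) : r B = #B :=
  hB.2.2.trans hB.2.1.symm

variable [DecidableEq α]

/-- `e` lies in the closure of `X`. -/
def Spans (r : Finset α → ℕ) (X : Finset α) (e : α) : Prop :=
  r (insert e X) = r X

instance (X : Finset α) (e : α) : Decidable (Spans r X e) :=
  inferInstanceAs (Decidable (r _ = r _))

theorem spans_of_mem {X : Finset α} {e : α} (he : e ∈ X) : Spans r X e := by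
  rw [Spans, insert_eq_of_mem he]

namespace IsRankFn

theorem rank_le_card (hr : IsRankFn r) (X : Finset α) : r X ≤ #X :=
  hr.1 X

theorem rank_mono (hr : IsRankFn r) {X Y : Finset α} (h : X ⊆ Y) : r X ≤ r Y :=
  hr.2.1 X Y h

theorem submodular (hr : IsRankFn r) (X Y : Finset α) : r (X ∪ Y) + r (X ∩ Y) ≤ r X + r Y :=
  hr.2.2 X Y

theorem rank_union_le_add_card (hr : IsRankFn r) (X Y : Finset α) : r (X ∪ Y) ≤ r X + #Y := by
  induction Y using Finset.induction with
  | empty => simp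
  | insert a Y ha ih =>
    have hsub := hr.submodular (X ∪ Y) {a}
    have ha1 : r {a} ≤ 1 := by simpa using hr.rank_le_card {a}
    rw [union_insert, ← union_singleton, card_insert_of_notMem ha]
    omega

theorem rank_insert_le (hr : IsRankFn r) (X : Finset α) (a : α) : r (insert a X) ≤ r X + 1 := by
  simpa [← union_singleton] using hr.rank_union_le_add_card X {a}

theorem rank_eq_card_of_subset (hr : IsRankFn r) {I J : Finset α} (hI : r I = #I) (hJ : J ⊆ I) :
    r J = #J := by
  have h := hr.rank_union_le_add_card J (I \ J)
  rw [union_sdiff_of_subset hJ, card_sdiff_of_subset hJ] at h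
  have := card_le_card hJ
  have := hr.rank_le_card J
  omega

theorem rank_erase_lt (hr : IsRankFn r) {I : Finset α} (hI : r I = #I) {e : α} (he : e ∈ I) :
    r (I.erase e) < r I := by
  rw [hr.rank_eq_card_of_subset hI (erase_subset e I), hI]
  exact card_erase_lt_of_mem he

theorem spans_mono (hr : IsRankFn r) {X Y : Finset α} {e : α} (h : Spans r X e) (hXY : X ⊆ Y) :
    Spans r Y e := by
  have hsub := hr.submodular (insert e X) Y
  rw [insert_union, union_eq_right.mpr hXY] at hsub
  have := hr.rank_mono (subset_inter (subset_insert e X) hXY)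
  have := hr.rank_mono (subset_insert e Y)
  unfold Spans at h ⊢
  omega

theorem spans_of_subset_of_rank_eq (hr : IsRankFn r) {X Y : Finset α} {e : α} (h : Spans r Y e)
    (hXY : X ⊆ Y) (hrXY : r X = r Y) : Spans r X e := by
  have := hr.rank_mono (insert_subset_insert e hXY)
  have := hr.rank_mono (subset_insert e X)
  unfold Spans at h ⊢
  omega

theorem rank_union_eq_iff (hr : IsRankFn r) {X T : Finset α} :
    r (X ∪ T) = r X ↔ ∀ t ∈ T, Spans r X t := by
  refine ⟨fun h t ht => ?_, fun h => ?_⟩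
  · have := hr.rank_mono (insert_subset (mem_union_right X ht) subset_union_left)
    have := hr.rank_mono (subset_insert t X)
    unfold Spans
    omega
  · induction T using Finset.induction with
    | empty => simp
    | insert a T ha ih =>
      rw [union_insert]
      exact hr.spans_mono (h a (mem_insert_self a T)) subset_union_left |>.trans
        (ih fun t ht => h t (mem_insert_of_mem ht))

/-- Inside an independent set, the sets spanning a given element are closed under intersection
(the fundamental circuit of `e` lies in each of them). -/
theorem spans_inter (hr : IsRankFn r) {X Y : Finset α} {e : α} (hXY : r (X ∪ Y) = #(X ∪ Y))
    (hX : Spans r X e) (hY : Spans r Y e) : Spans r (X ∩ Y) e := by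
  have hind {Z : Finset α} (hZ : Z ⊆ X ∪ Y) : r Z = #Z := hr.rank_eq_card_of_subset hXY hZ
  have hsub := hr.submodular (insert e X) (insert e Y)
  rw [← insert_union_distrib, ← insert_inter_distrib, hX, hY, hind subset_union_left,
    hind subset_union_right] at hsub
  have hXY_le := hr.rank_mono (subset_insert e (X ∪ Y))
  have hle := hr.rank_mono (subset_insert e (X ∩ Y))
  rw [hXY] at hXY_le
  rw [hind (inter_subset_left.trans subset_union_left)] at hle
  rw [Spans, hind (inter_subset_left.trans subset_union_left)]
  have := card_union_add_card_inter X Y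
  omega

end IsRankFn

end RankFunction

section Greedy

variable {α β : Type} [DecidableEq α] [LinearOrder β] {r : Finset α → ℕ} {key : α → β}

def greedy (r : Finset α → ℕ) (key : α → β) (E : Finset α) : Finset α :=
  E.filter fun e => ¬ Spans r (E.filter (key · < key e)) e

theorem greedy_subset (E : Finset α) : greedy r key E ⊆ E :=
  filter_subset _ _

theorem greedy_filter_key_lt (E : Finset α) (k : β) :
    greedy r key (E.filter (key · < k)) = (greedy r key E).filter (key · < k) := by
  ext e
  simp only [greedy, mem_filter, filter_filter]
  by_cases hek : key e < k
  · have : E.filter (fun f => key f < k ∧ key f < key e) = E.filter (key · < key e) :=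
      filter_congr fun f _ => ⟨And.right, fun h => ⟨h.trans hek, h⟩⟩
    rw [this]
    tauto
  · tauto

theorem greedy_insert_of_forall_lt {a : α} {s : Finset α} (ha : ∀ x ∈ s, key x < key a) :
    greedy r key (insert a s) =
      if Spans r s a then greedy r key s else insert a (greedy r key s) := by
  have hs : (insert a s).filter (key · < key a) = s := by
    rw [filter_insert, if_neg (lt_irrefl _), filter_true_of_mem ha]
  have hx : ∀ x ∈ s, (insert a s).filter (key · < key x) = s.filter (key · < key x) :=
    fun x hx => by rw [filter_insert, if_neg (ha x hx).asymm]
  have hmem : ∀ x, x ∈ greedy r key (insert a s) ↔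
      (x = a ∧ ¬ Spans r s a) ∨ x ∈ greedy r key s := by
    intro x
    simp only [greedy, mem_filter, mem_insert]
    constructor
    · rintro ⟨rfl | hxs, hspan⟩
      · exact Or.inl ⟨rfl, by rwa [hs] at hspan⟩
      · exact Or.inr ⟨hxs, by rwa [hx x hxs] at hspan⟩
    · rintro (⟨rfl, hspan⟩ | ⟨hxs, hspan⟩)
      · exact ⟨Or.inl rfl, by rwa [hs]⟩
      · exact ⟨Or.inr hxs, by rwa [hx x hxs]⟩
  ext x
  split_ifs with hsa <;> simp [hmem, hsa]

theorem greedy_isBasis (hr : IsRankFn r) (hkey : Function.Injective key) (E : Finset α) :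
    IsBasis r E (greedy r key E) := by
  refine ⟨greedy_subset E, ?_⟩
  induction E using Finset.induction_on_max_value key with
  | empty => simp [greedy, Nat.le_zero.1 (hr.rank_le_card ∅)]
  | insert a s has hmax ih =>
    have hlt : ∀ x ∈ s, key x < key a := fun x hx =>
      (hmax x hx).lt_of_ne (hkey.ne (ne_of_mem_of_not_mem hx has))
    rw [greedy_insert_of_forall_lt hlt]
    obtain ⟨hcard, hrank⟩ := ih
    split_ifs with hsa
    · exact ⟨hcard.trans hsa.symm, hrank.trans hsa.symm⟩
    · have hGa : a ∉ greedy r key s := fun h => has (greedy_subset s h)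
      have hGsa : ¬ Spans r (greedy r key s) a := fun h => hsa (hr.spans_mono h (greedy_subset s))
      have := hr.rank_insert_le s a
      have := hr.rank_mono (subset_insert a s)
      have := hr.rank_mono (subset_insert a (greedy r key s))
      have := hr.rank_le_card (insert a (greedy r key s))
      rw [card_insert_of_notMem hGa] at this ⊢
      unfold Spans at hsa hGsa
      omega

theorem spans_greedy_filter_of_notMem (hr : IsRankFn r) (hkey : Function.Injective key)
    {E : Finset α} {e : α} (he : e ∈ E) (hG : e ∉ greedy r key E) :
    Spans r ((greedy r key E).filter (key · < key e)) e := by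
  rw [← greedy_filter_key_lt]
  have hB := greedy_isBasis hr hkey (E.filter (key · < key e))
  have hspan : Spans r (E.filter (key · < key e)) e := by simpa [greedy, he] using hG
  exact hr.spans_of_subset_of_rank_eq hspan hB.1 hB.2.2

end Greedy

section Activity

variable {α : Type} [LinearOrder α] {r : Finset α → ℕ} {E A B B' : Finset α}

def internallyActive (r : Finset α → ℕ) (E B : Finset α) : Finset α :=
  B.filter fun e => r (B.erase e ∪ E.filter (· < e)) = r (B.erase e)

def externallyActive (r : Finset α → ℕ) (E B : Finset α) : Finset α :=
  (E \ B).filter fun e => Spans r (B.filter (e < ·)) e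

/-- `A` lies in Crapo's interval `[B \ internallyActive r E B, B ∪ externallyActive r E B]`. -/
def InActivityInterval (r : Finset α → ℕ) (E B A : Finset α) : Prop :=
  B \ A ⊆ internallyActive r E B ∧ A \ B ⊆ externallyActive r E B

instance : DecidablePred (InActivityInterval r E B) :=
  fun _ => inferInstanceAs (Decidable (_ ∧ _))

/-- The order listing `A` decreasingly, followed by the other elements increasingly. -/
def activityKey (A : Finset α) (f : α) : αᵒᵈ ⊕ₗ α :=
  toLex (if f ∈ A then Sum.inl (OrderDual.toDual f) else Sum.inr f)

theorem activityKey_injective (A : Finset α) : Function.Injective (activityKey A) := by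
  intro f g h
  unfold activityKey at h
  split_ifs at h <;> simp_all

theorem activityKey_lt_iff_of_mem {e f : α} (he : e ∈ A) :
    activityKey A f < activityKey A e ↔ f ∈ A ∧ e < f := by
  unfold activityKey
  split_ifs with hf <;> simp [hf]

theorem activityKey_lt_of_notMem {e f : α} (he : e ∉ A) (hfe : f < e) :
    activityKey A f < activityKey A e := by
  unfold activityKey
  split_ifs with hf <;> simp [hfe]

theorem inActivityInterval_greedy (hr : IsRankFn r) (hA : A ⊆ E) :
    InActivityInterval r E (greedy r (activityKey A) E) A := by
  set G := greedy r (activityKey A) E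
  have hspan : ∀ g ∈ E, g ∉ G → Spans r (G.filter (activityKey A · < activityKey A g)) g :=
    fun g hg hgG => spans_greedy_filter_of_notMem hr (activityKey_injective A) hg hgG
  refine ⟨fun e he => ?_, fun e he => ?_⟩
  · obtain ⟨heG, heA⟩ := mem_sdiff.1 he
    refine mem_filter.2 ⟨heG, hr.rank_union_eq_iff.2 fun g hg => ?_⟩
    obtain ⟨hgE, hge⟩ := mem_filter.1 hg
    by_cases hgG : g ∈ G
    · exact spans_of_mem (mem_erase.2 ⟨hge.ne, hgG⟩)
    refine hr.spans_mono (hspan g hgE hgG) fun f hf => mem_erase.2 ⟨?_, (mem_filter.1 hf).1⟩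
    rintro rfl
    exact (activityKey_lt_of_notMem heA hge).asymm (mem_filter.1 hf).2
  · obtain ⟨heA, heG⟩ := mem_sdiff.1 he
    refine mem_filter.2 ⟨mem_sdiff.2 ⟨hA heA, heG⟩, hr.spans_mono (hspan e (hA heA) heG) ?_⟩
    intro f hf
    obtain ⟨hfG, hfe⟩ := mem_filter.1 hf
    exact mem_filter.2 ⟨hfG, ((activityKey_lt_iff_of_mem heA).1 hfe).2⟩

theorem not_inActivityInterval_both (hr : IsRankFn r) (hB : IsBasis r E B)
    (hB' : IsBasis r E B') {e : α} (heB : e ∈ B) (heB' : e ∉ B')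
    (habove : ∀ f, e < f → (f ∈ B ↔ f ∈ B'))
    (h : InActivityInterval r E B A) (h' : InActivityInterval r E B' A) : False := by
  -- In both cases `B.erase e` turns out to span a set of rank `r B`.
  have hlt := hr.rank_erase_lt hB.rank_eq_card heB
  by_cases heA : e ∈ A
  · have hext := (mem_filter.1 (h'.2 (mem_sdiff.2 ⟨heA, heB'⟩))).2
    have hspan : Spans r (B.erase e) e := hr.spans_mono hext fun f hf =>
      mem_erase.2 ⟨(mem_filter.1 hf).2.ne', (habove f (mem_filter.1 hf).2).2 (mem_filter.1 hf).1⟩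
    rw [Spans, insert_erase heB] at hspan
    omega
  · have hint := (mem_filter.1 (h.1 (mem_sdiff.2 ⟨heB, heA⟩))).2
    have hspan : ∀ g ∈ B', Spans r (B.erase e) g := by
      intro g hg
      rcases lt_or_gt_of_ne (ne_of_mem_of_not_mem hg heB') with hge | hge
      · exact hr.rank_union_eq_iff.1 hint g (mem_filter.2 ⟨hB'.1 hg, hge⟩)
      · exact spans_of_mem (mem_erase.2 ⟨hge.ne', (habove g hge).2 hg⟩)
    have := hr.rank_union_eq_iff.2 hspan
    have := hr.rank_mono (subset_union_right : B' ⊆ B.erase e ∪ B')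
    have := hB.2.2
    have := hB'.2.2
    omega

theorem eq_of_inActivityInterval (hr : IsRankFn r) (hB : IsBasis r E B) (hB' : IsBasis r E B')
    (h : InActivityInterval r E B A) (h' : InActivityInterval r E B' A) : B = B' := by
  by_contra hne
  have hΔ : (symmDiff B B').Nonempty :=
    nonempty_iff_ne_empty.2 fun h => hne (symmDiff_eq_bot.1 h)
  have habove : ∀ f, (symmDiff B B').max' hΔ < f → (f ∈ B ↔ f ∈ B') := fun f hf => by
    by_contra hf'
    exact (le_max' _ f (mem_symmDiff.2 (by tauto))).not_gt hf
  rcases mem_symmDiff.1 (max'_mem _ hΔ) with ⟨heB, heB'⟩ | ⟨heB', heB⟩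
  · exact not_inActivityInterval_both hr hB hB' heB heB' habove h h'
  · exact not_inActivityInterval_both hr hB' hB heB' heB (fun f hf => (habove f hf).symm) h' h

theorem greedy_activityKey_eq_iff (hr : IsRankFn r) (hA : A ⊆ E) (hB : IsBasis r E B) :
    greedy r (activityKey A) E = B ↔ InActivityInterval r E B A :=
  ⟨fun h => h ▸ inActivityInterval_greedy hr hA, fun h =>
    eq_of_inActivityInterval hr (greedy_isBasis hr (activityKey_injective A) E) hB
      (inActivityInterval_greedy hr hA) h⟩

theorem spans_erase_of_externallyActive (hr : IsRankFn r) {s t : α}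
    (hs : s ∈ internallyActive r E B) (ht : t ∈ externallyActive r E B) :
    Spans r (B.erase s) t := by
  obtain ⟨hsB, hsI⟩ := mem_filter.1 hs
  obtain ⟨htEB, htE⟩ := mem_filter.1 ht
  obtain ⟨htE', htB⟩ := mem_sdiff.1 htEB
  rcases lt_or_gt_of_ne (ne_of_mem_of_not_mem hsB htB).symm with hts | hst
  · exact hr.rank_union_eq_iff.1 hsI t (mem_filter.2 ⟨htE', hts⟩)
  · refine hr.spans_mono htE fun f hf => mem_erase.2 ⟨?_, (mem_filter.1 hf).1⟩
    exact (hst.trans (mem_filter.1 hf).2).ne'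

theorem spans_sdiff_of_externallyActive (hr : IsRankFn r) (hB : IsBasis r E B) {S : Finset α}
    (hS : S ⊆ internallyActive r E B) {t : α} (ht : t ∈ externallyActive r E B) :
    Spans r (B \ S) t := by
  induction S using Finset.induction with
  | empty => simpa using hr.spans_mono (mem_filter.1 ht).2 (filter_subset _ B)
  | insert s S hsS ih =>
    have hindep := hr.rank_eq_card_of_subset hB.rank_eq_card
      (union_subset (sdiff_subset (t := S)) (erase_subset s B))
    have := hr.spans_inter hindep (ih fun x hx => hS (mem_insert_of_mem hx))
      (spans_erase_of_externallyActive hr (hS (mem_insert_self s S)) ht)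
    rwa [show (B \ S) ∩ B.erase s = B \ insert s S by ext; simp; tauto] at this

theorem rank_sdiff_union_add_card (hr : IsRankFn r) (hB : IsBasis r E B) {S T : Finset α}
    (hS : S ⊆ internallyActive r E B) (hT : T ⊆ externallyActive r E B) :
    r (B \ S ∪ T) + #S = r E := by
  have hSB : S ⊆ B := hS.trans (filter_subset _ _)
  rw [hr.rank_union_eq_iff.2 fun t ht => spans_sdiff_of_externallyActive hr hB hS (hT ht),
    hr.rank_eq_card_of_subset hB.rank_eq_card sdiff_subset, card_sdiff_of_subset hSB, ← hB.2.1]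
  have := card_le_card hSB
  omega

theorem sum_powerset_sub_one_pow {R ι : Type*} [CommRing R] (z : R) (I : Finset ι) :
    ∑ S ∈ I.powerset, (z - 1) ^ #S = z ^ #I := by
  simpa using sum_pow_mul_eq_add_pow (z - 1) 1 I

theorem sum_activityInterval {R : Type} [CommRing R] (x y : R) (hr : IsRankFn r)
    (hB : IsBasis r E B) :
    ∑ A ∈ E.powerset with InActivityInterval r E B A,
        (x - 1) ^ (r E - r A) * (y - 1) ^ (#A - r A)
      = x ^ #(internallyActive r E B) * y ^ #(externallyActive r E B) := by
  have hIB : internallyActive r E B ⊆ B := filter_subset _ _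
  have hEB : Disjoint (externallyActive r E B) B :=
    disjoint_left.2 fun e he => (mem_sdiff.1 (mem_filter.1 he).1).2
  have hEE : externallyActive r E B ⊆ E := (filter_subset _ _).trans sdiff_subset
  have hsplit {S T : Finset α} (hS : S ⊆ internallyActive r E B)
      (hT : T ⊆ externallyActive r E B) : B \ (B \ S ∪ T) = S ∧ (B \ S ∪ T) \ B = T := by
    have hSB := hS.trans hIB
    have hTB := disjoint_left.1 (hEB.mono_left hT)
    constructor <;> ext a <;> simp only [mem_sdiff, mem_union] <;> grind
  rw [← sum_powerset_sub_one_pow x, ← sum_powerset_sub_one_pow y, sum_mul_sum, ← sum_product']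
  symm
  refine sum_nbij' (fun p => B \ p.1 ∪ p.2) (fun A => (B \ A, A \ B)) ?_ ?_ ?_ ?_ ?_
  · simp only [mem_product, mem_powerset, mem_filter, and_imp, Prod.forall]
    intro S T hS hT
    refine ⟨union_subset (sdiff_subset.trans hB.1) (hT.trans hEE), ?_⟩
    rw [InActivityInterval, (hsplit hS hT).1, (hsplit hS hT).2]
    exact ⟨hS, hT⟩
  · simp only [mem_filter, mem_product, mem_powerset]
    exact fun A hA => hA.2
  · simp only [mem_product, mem_powerset, Prod.forall, Prod.mk.injEq]
    exact fun S T hST => hsplit hST.1 hST.2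
  · intro A _
    ext a
    simp only [mem_union, mem_sdiff]
    tauto
  · simp only [mem_product, mem_powerset, Prod.forall, and_imp]
    intro S T hS hT
    have hrank := rank_sdiff_union_add_card hr hB hS hT
    have hcard := card_union_of_disjoint (hEB.mono hT (sdiff_subset (t := S))).symm
    rw [card_sdiff_of_subset (hS.trans hIB)] at hcard
    have := card_le_card (hS.trans hIB)
    have := hB.2.1
    congr 2 <;> omega

end Activity

/-- **Basis-activity expansion of the Tutte polynomial.** Let `M = (E, r)` be a matroid with a
linearly ordered ground set.  For a basis `B` (i.e. `|B| = r B = r E`), an element `e ∉ B` of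
`E` is externally active if `r({f ∈ B : f > e} ∪ {e}) = r({f ∈ B : f > e})`, and `e ∈ B` is
internally active if `r((B \ {e}) ∪ {f ∈ E : f < e}) = r(B \ {e})`.  Then
`T(M;x,y) = Σ_{B basis} x^(i B) y^(e B)` where `i B`, `e B` count internally resp. externally
active elements. -/
theorem tutte_basis_activity {α : Type} [LinearOrder α]
    (E : Finset α) (r : Finset α → ℕ) (hr : IsRankFn r) :
    (∑ B ∈ E.powerset,
        (MvPolynomial.X 0 - 1 : MvPolynomial (Fin 2) ℤ) ^ (r E - r B) *
          (MvPolynomial.X 1 - 1) ^ (B.card - r B))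
      = ∑ B ∈ E.powerset.filter (fun B => B.card = r E ∧ r B = r E),
          (MvPolynomial.X 0 : MvPolynomial (Fin 2) ℤ) ^
              (B.filter (fun e =>
                r (B.erase e ∪ E.filter (fun f => f < e)) = r (B.erase e))).card *
            (MvPolynomial.X 1) ^
              ((E \ B).filter (fun e =>
                r (insert e (B.filter (fun f => e < f))) = r (B.filter (fun f => e < f)))).card := by
  have hbasis : ∀ B ∈ E.powerset.filter (fun B => #B = r E ∧ r B = r E), IsBasis r E B :=
    fun B hB => ⟨mem_powerset.1 (mem_filter.1 hB).1, (mem_filter.1 hB).2⟩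
  have hmaps : ∀ A ∈ E.powerset, greedy r (activityKey A) E ∈
      E.powerset.filter (fun B => #B = r E ∧ r B = r E) := fun A _ =>
    have hG := greedy_isBasis hr (activityKey_injective A) E
    mem_filter.2 ⟨mem_powerset.2 hG.1, hG.2⟩
  rw [← sum_fiberwise_of_maps_to hmaps]
  refine sum_congr rfl fun B hB => ?_
  rw [filter_congr fun A hA => greedy_activityKey_eq_iff hr (mem_powerset.1 hA) (hbasis B hB),
    sum_activityInterval _ _ hr (hbasis B hB)]
  rfl
end

section
/- Let G be a simple graph with finite vertex set V and edge set E, and let q be a positive integer. For a function f : V → {1,…,q}, let mono(f) be the number of edges uv ∈ E with f(u) = f(v). For a subset F ⊆ E, let c(F) be the number of connected components of the spanning subgraph (V, F). Then the following identity holds in ℤ[t]: Σ_{f : V → {1,…,q}} t^{mono(f)} = Σ_{F ⊆ E} (t−1)^{|F|} q^{c(F)}. (This is the coboundary-polynomial identity q^{n−r} χ̄(𝒜_G; q, t) = Σ_f t^{h(f)} for the graphical arrangement 𝒜_G; at t = 0 it recovers that the chromatic function of G is the polynomial Σ_{F⊆E} (−1)^{|F|} q^{c(F)}.) -/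
open Polynomial

/-!
Write `X = (X - 1) + 1` for each monochromatic edge and expand: `X ^ mono f` is the sum of
`(X - 1) ^ |F|` over the sets `F` of edges that are monochromatic under `f`. Exchanging the
two sums, the coefficient of `(X - 1) ^ |F|` counts the colorings constant on every edge of
`F`, i.e. constant on each connected component of `(V, F)`; there are `q ^ c(F)` of them.
-/

namespace Finset

variable {ι R : Type*} [CommRing R]

theorem powerset_filter_eq_filter_powerset (s : Finset ι) (p : ι → Prop) [DecidablePred p] :
    (s.filter p).powerset = s.powerset.filter (fun t => ∀ i ∈ t, p i) := by
  ext t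
  simp only [mem_powerset, mem_filter, subset_iff]
  grind

theorem pow_card_filter_eq_sum_powerset (x : R) (s : Finset ι) (p : ι → Prop)
    [DecidablePred p] :
    x ^ #(s.filter p) = ∑ t ∈ s.powerset.filter (fun t => ∀ i ∈ t, p i), (x - 1) ^ #t := by
  conv_lhs => rw [← sub_add_cancel x 1, ← sum_pow_mul_eq_add_pow]
  simp only [one_pow, mul_one, powerset_filter_eq_filter_powerset]

end Finset

namespace SimpleGraph

variable {V β : Type*} {H : SimpleGraph V}

theorem Walk.apply_eq_apply {f : V → β} (hf : ∀ u v, H.Adj u v → f u = f v) {v w : V}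
    (p : H.Walk v w) : f v = f w := by
  induction p with
  | nil => rfl
  | cons h _ ih => exact (hf _ _ h).trans ih

def ConnectedComponent.liftEquiv (H : SimpleGraph V) (β : Type*) :
    {f : V → β // ∀ u v, H.Adj u v → f u = f v} ≃ (H.ConnectedComponent → β) where
  toFun f := ConnectedComponent.lift f.1 fun _ _ p _ => p.apply_eq_apply f.2
  invFun g := ⟨g ∘ H.connectedComponentMk,
    fun _ _ h => congrArg g (ConnectedComponent.sound h.reachable)⟩
  left_inv _ := rfl
  right_inv _ := funext fun c => c.ind fun _ => rfl

theorem card_forall_adj_apply_eq [Finite V] (H : SimpleGraph V) (β : Type*) :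
    Nat.card {f : V → β // ∀ u v, H.Adj u v → f u = f v}
      = Nat.card β ^ Nat.card H.ConnectedComponent := by
  rw [Nat.card_congr (ConnectedComponent.liftEquiv H β), Nat.card_fun]

theorem fromEdgeSet_adj_imp_apply_eq_iff (s : Set (Sym2 V)) (f : V → β) :
    (∀ u v, (fromEdgeSet s).Adj u v → f u = f v) ↔ ∀ e ∈ s, (e.map f).IsDiag := by
  constructor
  · intro hf e he
    induction e with
    | h u v =>
      rw [Sym2.map_mk, Sym2.mk_isDiag_iff]
      by_cases huv : u = v
      · rw [huv]
      · exact hf u v ((fromEdgeSet_adj s).mpr ⟨he, huv⟩)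
  · intro hs u v h
    simpa using hs _ ((fromEdgeSet_adj s).mp h).1

theorem card_filter_forall_isDiag [Fintype V] [DecidableEq V] [Fintype β] [DecidableEq β]
    (F : Finset (Sym2 V)) :
    (Finset.univ.filter fun f : V → β => ∀ e ∈ F, (e.map f).IsDiag).card
      = Fintype.card β ^ Nat.card (fromEdgeSet (F : Set (Sym2 V))).ConnectedComponent := by
  rw [← Fintype.card_subtype, ← Nat.card_eq_fintype_card, ← Nat.card_eq_fintype_card,
    ← card_forall_adj_apply_eq]
  exact Nat.card_congr (Equiv.subtypeEquivRight fun f =>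
    (fromEdgeSet_adj_imp_apply_eq_iff (F : Set (Sym2 V)) f).symm)

end SimpleGraph

theorem graph_coboundary_identity_general {V : Type} [Fintype V] [DecidableEq V]
    (G : SimpleGraph V) [DecidableRel G.Adj] (q : ℕ) :
    ∑ f : V → Fin q,
        (X : Polynomial ℤ) ^ (G.edgeFinset.filter (fun e => (e.map f).IsDiag)).card
      = ∑ F ∈ G.edgeFinset.powerset,
          ((X : Polynomial ℤ) - 1) ^ F.card *
            (q : Polynomial ℤ) ^
              Nat.card (SimpleGraph.fromEdgeSet (↑F : Set (Sym2 V))).ConnectedComponent := by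
  simp_rw [Finset.pow_card_filter_eq_sum_powerset]
  rw [Finset.sum_comm' (t' := G.edgeFinset.powerset)
    (s' := fun F => Finset.univ.filter fun f : V → Fin q => ∀ e ∈ F, (e.map f).IsDiag)
    fun _ _ => by simp [and_comm]]
  refine Finset.sum_congr rfl fun F _ => ?_
  rw [Finset.sum_const, SimpleGraph.card_filter_forall_isDiag, Fintype.card_fin, nsmul_eq_mul,
    mul_comm, Nat.cast_pow]

/-- **The coboundary-polynomial identity for graphs.** Let `G` be a finite simple graph and
`q` a positive integer.  For a coloring `f : V → Fin q` let `mono f` be the number of edges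
whose two endpoints receive the same color, and for `F ⊆ E(G)` let `c F` be the number of
connected components of the spanning subgraph `(V, F)`.  Then, in `ℤ[t]`,
`Σ_f t^(mono f) = Σ_{F ⊆ E} (t-1)^|F| q^(c F)`. -/
theorem graph_coboundary_identity {V : Type} [Fintype V] [DecidableEq V]
    (G : SimpleGraph V) [DecidableRel G.Adj] (q : ℕ) (hq : 0 < q) :
    ∑ f : V → Fin q,
        (X : Polynomial ℤ) ^ (G.edgeFinset.filter (fun e => (e.map f).IsDiag)).card
      = ∑ F ∈ G.edgeFinset.powerset,
          ((X : Polynomial ℤ) - 1) ^ F.card *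
            (q : Polynomial ℤ) ^
              Nat.card (SimpleGraph.fromEdgeSet (↑F : Set (Sym2 V))).ConnectedComponent :=
  graph_coboundary_identity_general G q
end

section
/- (Characteristic polynomial of the braid arrangement / type A Coxeter arrangement.) Let n ≥ 1 and let 𝒜 be the arrangement in ℚ^n consisting of the hyperplanes {x : x_i = x_j} for 1 ≤ i < j ≤ n. Then, in ℤ[q], Σ_{ℬ ⊆ 𝒜} (−1)^{|ℬ|} q^{n−r(ℬ)} = q(q−1)(q−2)⋯(q−n+1), where r(ℬ) = n − dim ⋂ℬ (every subfamily is central since all hyperplanes are linear). -/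
/-!
The intersection of the hyperplanes `x i = x j` over the edges `{i, j}` of a subfamily `B` is the
space of vectors constant on the connected components of the graph `B`, so `n - r(B)` is the
number `c(B)` of those components. At `q = m ∈ ℕ`, `m ^ c(B)` counts the colourings
`Fin n → Fin m` constant along the edges of `B`. Exchanging the two sums, inclusion–exclusion
over the edges leaves exactly the colourings with no monochromatic edge (Whitney's formula for
the chromatic polynomial); for the complete graph these are the injective maps, of which there
are `m (m - 1) ⋯ (m - n + 1)`. Polynomials agreeing on all of `ℕ` are equal.
-/

open Polynomial
open scoped BigOperators

/-- The rank `r(B) = d - dim ⋂_{i ∈ B} H i` of a subfamily `B` of an arrangement `H` in `ℚ^d`,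
where the dimension of the (affine-subspace) intersection is the rank of the direction of its
affine span. -/
noncomputable def arrRank {d : ℕ} {I : Type} (H : I → Set (Fin d → ℚ)) (B : Finset I) : ℕ :=
  d - Module.finrank ℚ ↥((affineSpan ℚ (⋂ i ∈ B, H i)).direction)

open Finset

section QuotFunctions

variable {ι α : Type*} (r : ι → ι → Prop)

theorem Quot.range_comp_mk :
    Set.range (fun g : Quot r → α => g ∘ Quot.mk r) = {f | ∀ i j, r i j → f i = f j} := by
  ext f
  constructor
  · rintro ⟨g, rfl⟩ i j hij
    exact congrArg g (Quot.sound hij)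
  · intro hf
    exact ⟨Quot.lift f hf, rfl⟩

theorem Quot.card_respecting_fun [Finite ι] :
    Nat.card {f : ι → α // ∀ i j, r i j → f i = f j} = Nat.card α ^ Nat.card (Quot r) := by
  rw [← Nat.card_fun, ← Nat.card_range_of_injective Quot.mk_surjective.injective_comp_right,
    Quot.range_comp_mk]
  rfl

theorem Quot.finrank_range_funLeft_mk (K : Type*) [Field K] [Finite ι] :
    Module.finrank K (LinearMap.range (LinearMap.funLeft K K (Quot.mk r))) = Nat.card (Quot r) := by
  have := Fintype.ofFinite (Quot r)
  rw [LinearMap.finrank_range_of_inj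
      (LinearMap.funLeft_injective_of_surjective K K _ Quot.mk_surjective),
    Module.finrank_fintype_fun_eq_card, Nat.card_eq_fintype_card]

end QuotFunctions

section GraphicArrangement

variable {ι E : Type*} (ends : E → ι × ι)

/-- For a multigraph with edges `E` joining `(ends e).1` to `(ends e).2`, `Quot (edgeRel ends B)`
is the set of connected components of its spanning subgraph with edge set `B`. -/
def edgeRel (B : Finset E) (i j : ι) : Prop := ∃ e ∈ B, ends e = (i, j)

theorem forall_edgeRel_imp_iff {α : Type*} (B : Finset E) (f : ι → α) :
    (∀ i j, edgeRel ends B i j → f i = f j) ↔ ∀ e ∈ B, f (ends e).1 = f (ends e).2 := by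
  constructor
  · exact fun h e he => h _ _ ⟨e, he, rfl⟩
  · rintro h i j ⟨e, he, hij⟩
    simpa [hij] using h e he

theorem sub_arrRank_graphic {d : ℕ} {E : Type} (ends : E → Fin d × Fin d) (B : Finset E) :
    d - arrRank (fun e => {x : Fin d → ℚ | x (ends e).1 = x (ends e).2}) B
      = Nat.card (Quot (edgeRel ends B)) := by
  set V := LinearMap.range (LinearMap.funLeft ℚ ℚ (Quot.mk (edgeRel ends B)))
  have hV : ⋂ e ∈ B, {x : Fin d → ℚ | x (ends e).1 = x (ends e).2} = V := by
    refine Eq.trans ?_ ((LinearMap.coe_range _).trans (Quot.range_comp_mk _)).symm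
    ext x
    simp only [Set.mem_iInter, Set.mem_ofPred_eq, forall_edgeRel_imp_iff]
  have hspan : affineSpan ℚ (V : Set (Fin d → ℚ)) = V.toAffineSubspace :=
    AffineSubspace.affineSpan_coe V.toAffineSubspace
  have hle : Module.finrank ℚ V ≤ d := by
    simpa using V.finrank_le
  rw [arrRank, hV, hspan, Submodule.toAffineSubspace_direction, Nat.sub_sub_self hle,
    Quot.finrank_range_funLeft_mk]

theorem sum_neg_one_pow_mul_card_pow_edgeRel [Fintype ι] [DecidableEq ι] [Fintype E]
    [DecidableEq E] (α : Type*) [Fintype α] [DecidableEq α] :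
    ∑ B : Finset E, (-1 : ℤ) ^ #B * (Fintype.card α : ℤ) ^ Nat.card (Quot (edgeRel ends B))
      = #{f : ι → α | ∀ e, f (ends e).1 ≠ f (ends e).2} := by
  set monochromatic : (ι → α) → Finset E := fun f => {e | f (ends e).1 = f (ends e).2}
  have hpow (B : Finset E) : Fintype.card α ^ Nat.card (Quot (edgeRel ends B))
      = #{f : ι → α | B ⊆ monochromatic f} := by
    rw [← Nat.card_eq_fintype_card, ← Quot.card_respecting_fun]
    simp_rw [forall_edgeRel_imp_iff]
    rw [Nat.card_eq_fintype_card, Fintype.card_subtype]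
    simp [monochromatic, Finset.subset_iff]
  calc ∑ B : Finset E, (-1 : ℤ) ^ #B * (Fintype.card α : ℤ) ^ Nat.card (Quot (edgeRel ends B))
      = ∑ B : Finset E, ∑ f : ι → α with B ⊆ monochromatic f, (-1 : ℤ) ^ #B := by
        simp_rw [← Nat.cast_pow, hpow, Finset.sum_const, nsmul_eq_mul, mul_comm]
    _ = ∑ f : ι → α, ∑ B ∈ (monochromatic f).powerset, (-1 : ℤ) ^ #B :=
        Finset.sum_comm' (by simp)
    _ = #{f : ι → α | ∀ e, f (ends e).1 ≠ f (ends e).2} := by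
        simp_rw [Finset.sum_powerset_neg_one_pow_card, Finset.sum_boole, Nat.cast_inj]
        simp [monochromatic, Finset.filter_eq_empty_iff]

end GraphicArrangement

theorem Function.injective_iff_forall_lt_imp_ne {ι α : Type*} [LinearOrder ι] {f : ι → α} :
    Function.Injective f ↔ ∀ i j, i < j → f i ≠ f j := by
  refine ⟨fun hf i j hij => hf.ne hij.ne, fun h i j hfij => ?_⟩
  by_contra hij
  rcases lt_or_gt_of_ne hij with hlt | hgt
  · exact h i j hlt hfij
  · exact h j i hgt hfij.symm

theorem card_injective_fin (n m : ℕ) :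
    #{f : Fin n → Fin m | Function.Injective f} = m.descFactorial n := by
  rw [← Fintype.card_subtype, Fintype.card_congr (Equiv.subtypeInjectiveEquivEmbedding _ _),
    Fintype.card_embedding_eq, Fintype.card_fin, Fintype.card_fin]

theorem braid_characteristic_general (n : ℕ) :
    ∑ B : Finset {p : Fin n × Fin n // p.1 < p.2},
        (-1 : Polynomial ℤ) ^ B.card *
          (X : Polynomial ℤ) ^
            (n - arrRank (fun p : {p : Fin n × Fin n // p.1 < p.2} =>
              {x : Fin n → ℚ | x p.1.1 = x p.1.2}) B)
      = ∏ k ∈ Finset.range n, ((X : Polynomial ℤ) - (k : Polynomial ℤ)) := by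
  apply Polynomial.eq_of_infinite_eval_eq
  refine (Set.infinite_range_of_injective (Nat.cast_injective (R := ℤ))).mono ?_
  rintro _ ⟨m, rfl⟩
  have hrank (B : Finset {p : Fin n × Fin n // p.1 < p.2}) := sub_arrRank_graphic Subtype.val B
  have hwhitney := sum_neg_one_pow_mul_card_pow_edgeRel
    (Subtype.val : {p : Fin n × Fin n // p.1 < p.2} → Fin n × Fin n) (Fin m)
  rw [Fintype.card_fin] at hwhitney
  simp only [Set.mem_ofPred_eq, eval_finsetSum, eval_prod, eval_mul, eval_pow, eval_neg,
    eval_one, eval_X, eval_sub, eval_natCast]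
  rw [← descPochhammer_eval_eq_prod_range, descPochhammer_eval_eq_descFactorial,
    ← card_injective_fin]
  simp only [hrank, hwhitney, Function.injective_iff_forall_lt_imp_ne, Subtype.forall,
    Prod.forall]

/-- **Characteristic polynomial of the braid arrangement.** For `n ≥ 1`, the arrangement of
the hyperplanes `x i = x j` (`i < j`) in `ℚ^n` (all subfamilies are central, being linear)
satisfies `Σ_{B} (-1)^|B| q^(n - r B) = q(q-1)⋯(q-n+1)` in `ℤ[q]`. -/
theorem braid_characteristic (n : ℕ) (hn : 1 ≤ n) :
    ∑ B : Finset {p : Fin n × Fin n // p.1 < p.2},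
        (-1 : Polynomial ℤ) ^ B.card *
          (X : Polynomial ℤ) ^
            (n - arrRank (fun p : {p : Fin n × Fin n // p.1 < p.2} =>
              {x : Fin n → ℚ | x p.1.1 = x p.1.2}) B)
      = ∏ k ∈ Finset.range n, ((X : Polynomial ℤ) - (k : Polynomial ℤ)) :=
  braid_characteristic_general n
end

section
/- (Characteristic polynomial of the type BC Coxeter arrangement.) Let n ≥ 1 and let 𝒜 be the arrangement in ℚ^n consisting of the hyperplanes {x : x_i = x_j} and {x : x_i = −x_j} for 1 ≤ i < j ≤ n, together with the hyperplanes {x : x_i = 0} for 1 ≤ i ≤ n. Then, in ℤ[q], Σ_{ℬ ⊆ 𝒜} (−1)^{|ℬ|} q^{n−r(ℬ)} = (q−1)(q−3)⋯(q−2n+1) = ∏_{i=1}^{n} (q−(2i−1)), where r(ℬ) = n − dim ⋂ℬ (every subfamily is central since all hyperplanes are linear). -/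
open Polynomial
open scoped BigOperators

open Finset Function

/-!
Evaluate both sides at `q = 2m + 1`. On `⋂ B` the equations `x i = ± x j`, `x i = 0` force
whole classes ("blocks") of signed coordinates `±x i`, `0` to be equal. Negation permutes the
blocks; a block equal to its own negative must vanish, and picking one block out of every
remaining pair gives free coordinates. So `⋂ B ≅ ℚ^k` with `k = n - r(B)`, and the same
parametrisation shows that `⋂ B` has exactly `(2m + 1)^k` points in the box `[-m, m]^n`.
By inclusion–exclusion the left side at `2m + 1` therefore counts the box points on no
hyperplane, i.e. those with nonzero coordinates of pairwise distinct absolute values: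
there are `2^n m (m - 1) ⋯ (m - n + 1) = ∏ (2m + 1 - (2k + 1))` of them. Two integer
polynomials that agree at infinitely many points are equal.
-/

section OddExtend

variable {Q R : Type*} [LinearOrder Q] [AddCommGroup R] {ν : Q → Q} (hν : Involutive ν)

def oddExtend (h : {c // c < ν c} → R) (c : Q) : R :=
  if hc : c < ν c then h ⟨c, hc⟩
  else if hc' : ν c < c then -h ⟨ν c, by rwa [hν c]⟩ else 0

lemma oddExtend_of_lt (h : {c // c < ν c} → R) {c : Q} (hc : c < ν c) :
    oddExtend hν h c = h ⟨c, hc⟩ :=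
  dif_pos hc

lemma oddExtend_apply_invol (h : {c // c < ν c} → R) (c : Q) :
    oddExtend hν h (ν c) = -oddExtend hν h c := by
  unfold oddExtend
  simp only [hν c]
  split_ifs <;> first | rfl | simp | (exfalso; order)

lemma oddExtend_mem {A : Set R} (h0 : 0 ∈ A) (hA : ∀ a ∈ A, -a ∈ A)
    {h : {c // c < ν c} → R} (hh : ∀ c, h c ∈ A) (c : Q) : oddExtend hν h c ∈ A := by
  unfold oddExtend
  split_ifs
  exacts [hh _, hA _ (hh _), h0]

lemma oddExtend_restrict [IsAddTorsionFree R] {g : Q → R} (hg : ∀ c, g (ν c) = -g c) :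
    oddExtend hν (fun c => g c) = g := by
  funext c
  unfold oddExtend
  split_ifs with hlt hgt
  · rfl
  · show -g (ν c) = g c
    rw [hg, neg_neg]
  · have hfix : ν c = c := le_antisymm (not_lt.1 hlt) (not_lt.1 hgt)
    have := hg c
    rw [hfix] at this
    exact (self_eq_neg.1 this).symm

end OddExtend

theorem sum_neg_one_pow_mul_card_filter_forall {ι α : Type*} [Fintype ι] [DecidableEq ι]
    (D : Finset α) (P : ι → α → Prop) [∀ i, DecidablePred (P i)] :
    ∑ B : Finset ι, (-1 : ℤ) ^ #B * #{x ∈ D | ∀ i ∈ B, P i x} = #{x ∈ D | ∀ i, ¬P i x} := by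
  have hx (x : α) : ∑ B : Finset ι, (-1 : ℤ) ^ #B * (if ∀ i ∈ B, P i x then 1 else 0)
      = if ∀ i, ¬P i x then 1 else 0 := by
    have hB (B : Finset ι) : (∀ i ∈ B, P i x) ↔ B ∈ (univ.filter (P · x)).powerset := by
      simp [subset_iff]
    simp_rw [mul_ite, mul_one, mul_zero, hB, ← sum_filter, filter_mem_eq_inter, univ_inter,
      sum_powerset_neg_one_pow_card, filter_eq_empty_iff]
    simp
  simp_rw [card_filter, Nat.cast_sum, mul_sum, Nat.cast_ite, Nat.cast_one, Nat.cast_zero]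
  rw [sum_comm]
  exact sum_congr rfl fun x _ => hx x

theorem card_injective_comp_fst {α β γ : Type*} [Fintype α] [Fintype β] [Fintype γ] :
    Nat.card {f : α → β × γ // Injective (Prod.fst ∘ f)}
      = (Fintype.card β).descFactorial (Fintype.card α) * Fintype.card γ ^ Fintype.card α := by
  let e : {f : α → β × γ // Injective (Prod.fst ∘ f)} ≃ (α ↪ β) × (α → γ) :=
    ((Equiv.arrowProdEquivProdArrow _ _ _).subtypeEquiv (q := fun g => Injective g.1)
      fun _ => Iff.rfl).trans (Equiv.prodSubtypeFstEquivSubtypeProd.trans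
        ((Equiv.subtypeInjectiveEquivEmbedding α β).prodCongr (Equiv.refl _)))
  rw [Nat.card_congr e, Nat.card_prod, Nat.card_fun, Nat.card_eq_fintype_card,
    Fintype.card_embedding_eq, Nat.card_eq_fintype_card, Nat.card_eq_fintype_card]

theorem sub_arrRank_eq_finrank {d : ℕ} {I : Type} (H : I → Set (Fin d → ℚ)) (B : Finset I)
    (V : Submodule ℚ (Fin d → ℚ)) (hV : ⋂ i ∈ B, H i = V) :
    d - arrRank H B = Module.finrank ℚ V := by
  have hle : Module.finrank ℚ V ≤ d := (Submodule.finrank_le V).trans_eq (by simp)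
  have hV' : (V : Set (Fin d → ℚ)) = V.toAffineSubspace := rfl
  rw [arrRank, hV, hV', AffineSubspace.affineSpan_coe, Submodule.toAffineSubspace_direction]
  omega

namespace TypeBC

abbrev Idx (n : ℕ) : Type :=
  ({p : Fin n × Fin n // p.1 < p.2} ⊕ {p : Fin n × Fin n // p.1 < p.2}) ⊕ Fin n

variable {n : ℕ}

def OnHyperplane {R : Type*} [Neg R] [Zero R] (x : Fin n → R) : Idx n → Prop
  | .inl (.inl p) => x p.1.1 = x p.1.2
  | .inl (.inr p) => x p.1.1 = -x p.1.2
  | .inr i => x i = 0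

def IsSolution {R : Type*} [Neg R] [Zero R] (B : Finset (Idx n)) (x : Fin n → R) : Prop :=
  ∀ i ∈ B, OnHyperplane x i

variable (n) in
def hyperplane : Idx n → Set (Fin n → ℚ) :=
  Sum.elim
    (Sum.elim
      (fun p : {p : Fin n × Fin n // p.1 < p.2} => {x : Fin n → ℚ | x p.1.1 = x p.1.2})
      (fun p : {p : Fin n × Fin n // p.1 < p.2} => {x : Fin n → ℚ | x p.1.1 = -x p.1.2}))
    (fun i : Fin n => {x : Fin n → ℚ | x i = 0})

lemma biInter_hyperplane (B : Finset (Idx n)) :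
    ⋂ i ∈ B, hyperplane n i = {x | IsSolution B x} := by
  ext x
  simp only [Set.mem_iInter]
  refine forall₂_congr fun i _ => ?_
  rcases i with (p | p) | j <;> rfl

/-- `(some i, s)` stands for the coordinate `x i` and `(none, s)` for the constant `0`, with the
sign `+` if `s` and `-` otherwise. -/
abbrev SignedCoord (n : ℕ) : Type := Option (Fin n) × Bool

def SignedCoord.flip (p : SignedCoord n) : SignedCoord n := (p.1, !p.2)

section SignedVal

variable {R : Type*} [AddCommGroup R]

def signedVal (x : Fin n → R) (p : SignedCoord n) : R :=
  bif p.2 then p.1.elim 0 x else -p.1.elim 0 x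

@[simp] lemma signedVal_some_true (x : Fin n → R) (i : Fin n) :
    signedVal x (some i, true) = x i := rfl

@[simp] lemma signedVal_some_false (x : Fin n → R) (i : Fin n) :
    signedVal x (some i, false) = -x i := rfl

@[simp] lemma signedVal_none (x : Fin n → R) (b : Bool) : signedVal x (none, b) = 0 := by
  cases b <;> simp [signedVal]

lemma signedVal_flip (x : Fin n → R) (p : SignedCoord n) :
    signedVal x p.flip = -signedVal x p := by
  obtain ⟨_ | i, _ | _⟩ := p <;> simp [SignedCoord.flip]

lemma signedVal_zero (p : SignedCoord n) : signedVal (0 : Fin n → R) p = 0 := by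
  obtain ⟨_ | i, _ | _⟩ := p <;> simp

lemma signedVal_add (x y : Fin n → R) (p : SignedCoord n) :
    signedVal (x + y) p = signedVal x p + signedVal y p := by
  obtain ⟨_ | i, _ | _⟩ := p <;> simp [add_comm]

lemma signedVal_smul {S : Type*} [Ring S] [Module S R] (c : S) (x : Fin n → R)
    (p : SignedCoord n) : signedVal (c • x) p = c • signedVal x p := by
  obtain ⟨_ | i, _ | _⟩ := p <;> simp

lemma signedVal_mem {A : Set R} (h0 : 0 ∈ A) (hA : ∀ a ∈ A, -a ∈ A) {x : Fin n → R}
    (hx : ∀ i, x i ∈ A) (p : SignedCoord n) : signedVal x p ∈ A := by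
  obtain ⟨_ | i, _ | _⟩ := p
  exacts [by simpa using h0, by simpa using h0, hA _ (hx i), hx i]

end SignedVal

/-- The equalities between signed coordinates imposed by the hyperplanes of `B`. -/
inductive Linked (B : Finset (Idx n)) : SignedCoord n → SignedCoord n → Prop
  | eq (p) (h : .inl (.inl p) ∈ B) (b : Bool) : Linked B (some p.1.1, b) (some p.1.2, b)
  | neg (p) (h : .inl (.inr p) ∈ B) (b : Bool) : Linked B (some p.1.1, b) (some p.1.2, !b)
  | zero (i) (h : .inr i ∈ B) (b : Bool) : Linked B (some i, b) (none, b)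
  | none (b b' : Bool) : Linked B (none, b) (none, b')

lemma Linked.flip {B : Finset (Idx n)} {p q : SignedCoord n} (h : Linked B p q) :
    Linked B p.flip q.flip := by
  cases h with
  | eq p h b => exact .eq p h !b
  | neg p h b => exact .neg p h !b
  | zero i h b => exact .zero i h !b
  | none b b' => exact .none (!b) (!b')

lemma isSolution_iff {R : Type*} [AddCommGroup R] {B : Finset (Idx n)} {x : Fin n → R} :
    IsSolution B x ↔ ∀ p q, Linked B p q → signedVal x p = signedVal x q := by
  refine ⟨fun hx p q h => ?_, fun h i hi => ?_⟩
  · cases h with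
    | eq p hp b => cases b <;> simp [show x p.1.1 = x p.1.2 from hx _ hp]
    | neg p hp b => cases b <;> simp [show x p.1.1 = -x p.1.2 from hx _ hp]
    | zero i hi b => cases b <;> simp [show x i = 0 from hx _ hi]
    | none b b' => simp
  · rcases i with (p | p) | j
    · simpa [OnHyperplane] using h _ _ (.eq p hi true)
    · simpa [OnHyperplane] using h _ _ (.neg p hi true)
    · simpa [OnHyperplane] using h _ _ (.zero j hi true)

/-- Classes of signed coordinates that agree on every solution of `B`. -/
def Block (B : Finset (Idx n)) : Type := Quot (Linked B)

namespace Block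

variable {B : Finset (Idx n)}

instance : Finite (Block B) := Quot.finite _

noncomputable instance : LinearOrder (Block B) := WellOrderingRel.isWellOrder.linearOrder

def mk (B : Finset (Idx n)) (p : SignedCoord n) : Block B := Quot.mk _ p

lemma mk_eq_mk {p q : SignedCoord n} (h : Linked B p q) : mk B p = mk B q := Quot.sound h

@[elab_as_elim]
lemma ind {motive : Block B → Prop} (h : ∀ p, motive (mk B p)) (c : Block B) : motive c :=
  Quot.ind h c

def neg : Block B → Block B := Quot.map SignedCoord.flip fun _ _ => Linked.flip

@[simp] lemma neg_mk (p : SignedCoord n) : (mk B p).neg = mk B p.flip := rfl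

lemma neg_involutive : Involutive (neg (B := B)) := by
  intro c
  induction c using Block.ind with
  | h p => simp [SignedCoord.flip]

lemma neg_mk_none (b : Bool) : (mk B (none, b)).neg = mk B (none, b) :=
  mk_eq_mk (.none _ _)

end Block

/-- One block out of each pair exchanged by negation: the free coordinates of `⋂ B`. -/
abbrev FreeBlock (B : Finset (Idx n)) : Type := {c : Block B // c < c.neg}

section BlockVal

variable {R : Type*} [AddCommGroup R] {B : Finset (Idx n)}

noncomputable def blockVal (x : Fin n → R) (c : Block B) : R := signedVal x (Quot.out c)

lemma blockVal_mk {x : Fin n → R} (hx : IsSolution B x) (p : SignedCoord n) :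
    blockVal x (Block.mk B p) = signedVal x p :=
  congrArg (Quot.lift (signedVal x) (isSolution_iff.1 hx)) (Quot.out_eq (Block.mk B p))

lemma blockVal_neg {x : Fin n → R} (hx : IsSolution B x) (c : Block B) :
    blockVal x c.neg = -blockVal x c := by
  induction c using Block.ind with
  | h p => rw [Block.neg_mk, blockVal_mk hx, blockVal_mk hx, signedVal_flip]

def ofBlockFun (g : Block B → R) : Fin n → R := fun i => g (Block.mk B (some i, true))

lemma ofBlockFun_blockVal {x : Fin n → R} (hx : IsSolution B x) :
    ofBlockFun (B := B) (blockVal x) = x :=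
  funext fun i => blockVal_mk hx (some i, true)

variable [IsAddTorsionFree R] {g : Block B → R}

/-- The zero block is its own negative. -/
lemma apply_mk_none_eq_zero (hg : ∀ c, g c.neg = -g c) (b : Bool) :
    g (Block.mk B (none, b)) = 0 := by
  have h := hg (Block.mk B (none, b))
  rw [Block.neg_mk_none] at h
  exact self_eq_neg.1 h

lemma signedVal_ofBlockFun (hg : ∀ c, g c.neg = -g c) (p : SignedCoord n) :
    signedVal (ofBlockFun g) p = g (Block.mk B p) := by
  obtain ⟨_ | i, _ | _⟩ := p
  · rw [signedVal_none, apply_mk_none_eq_zero hg]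
  · rw [signedVal_none, apply_mk_none_eq_zero hg]
  · exact (hg (Block.mk B (some i, true))).symm
  · rfl

lemma isSolution_ofBlockFun (hg : ∀ c, g c.neg = -g c) : IsSolution B (ofBlockFun g) :=
  isSolution_iff.2 fun p q h => by
    rw [signedVal_ofBlockFun hg, signedVal_ofBlockFun hg, Block.mk_eq_mk h]

lemma blockVal_ofBlockFun (hg : ∀ c, g c.neg = -g c) (c : Block B) :
    blockVal (ofBlockFun g) c = g c := by
  induction c using Block.ind with
  | h p => rw [blockVal_mk (isSolution_ofBlockFun hg), signedVal_ofBlockFun hg]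

end BlockVal

section FreeVals

variable {R : Type*} [AddCommGroup R] {B : Finset (Idx n)}

noncomputable def freeVals (B : Finset (Idx n)) (x : Fin n → R) : FreeBlock B → R :=
  fun c => blockVal x c.1

noncomputable def ofFreeVals (h : FreeBlock B → R) : Fin n → R :=
  ofBlockFun (oddExtend Block.neg_involutive h)

variable [IsAddTorsionFree R]

lemma isSolution_ofFreeVals (h : FreeBlock B → R) : IsSolution B (ofFreeVals h) :=
  isSolution_ofBlockFun (oddExtend_apply_invol _ h)

lemma freeVals_ofFreeVals (h : FreeBlock B → R) : freeVals B (ofFreeVals h) = h := by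
  funext c
  rw [freeVals, ofFreeVals, blockVal_ofBlockFun (oddExtend_apply_invol _ h),
    oddExtend_of_lt _ _ c.2]

lemma ofFreeVals_freeVals {x : Fin n → R} (hx : IsSolution B x) :
    ofFreeVals (freeVals B x) = x := by
  unfold freeVals
  rw [ofFreeVals, oddExtend_restrict _ (blockVal_neg hx), ofBlockFun_blockVal hx]

noncomputable def solutionsEquiv {A : Set R} (h0 : 0 ∈ A) (hA : ∀ a ∈ A, -a ∈ A) :
    {x : Fin n → R // (∀ i, x i ∈ A) ∧ IsSolution B x} ≃ (FreeBlock B → A) where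
  toFun x c := ⟨freeVals B x.1 c, signedVal_mem h0 hA x.2.1 _⟩
  invFun h := ⟨ofFreeVals fun c => h c,
    fun _ => oddExtend_mem Block.neg_involutive h0 hA (fun c => (h c).2) _,
    isSolution_ofFreeVals _⟩
  left_inv x := Subtype.ext (ofFreeVals_freeVals x.2.2)
  right_inv h := funext fun c => Subtype.ext (congrFun (freeVals_ofFreeVals fun c => (h c : R)) c)

end FreeVals

def solSubmodule (S : Type*) [Ring S] (M : Type*) [AddCommGroup M] [Module S M]
    (B : Finset (Idx n)) : Submodule S (Fin n → M) where
  carrier := {x | IsSolution B x}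
  add_mem' {x y} hx hy := isSolution_iff.2 fun p q h => by
    rw [signedVal_add, signedVal_add, isSolution_iff.1 hx p q h, isSolution_iff.1 hy p q h]
  zero_mem' := isSolution_iff.2 fun p q _ => by rw [signedVal_zero, signedVal_zero]
  smul_mem' c x hx := isSolution_iff.2 fun p q h => by
    rw [signedVal_smul, signedVal_smul, isSolution_iff.1 hx p q h]

theorem finrank_solSubmodule {K : Type*} [Field K] [IsAddTorsionFree K] (B : Finset (Idx n)) :
    Module.finrank K (solSubmodule K K B) = Nat.card (FreeBlock B) := by
  let f : solSubmodule K K B →ₗ[K] (FreeBlock B → K) :=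
    { toFun x := freeVals B x
      map_add' x y := funext fun _ => signedVal_add _ _ _
      map_smul' c x := funext fun _ => signedVal_smul _ _ _ }
  have hf : Bijective f := by
    refine ⟨fun x y hxy => Subtype.ext ?_, fun h => ⟨⟨ofFreeVals h, isSolution_ofFreeVals h⟩,
      freeVals_ofFreeVals h⟩⟩
    rw [← ofFreeVals_freeVals x.2, ← ofFreeVals_freeVals y.2]
    exact congrArg ofFreeVals hxy
  have := Fintype.ofFinite (FreeBlock B)
  rw [(LinearEquiv.ofBijective f hf).finrank_eq, Module.finrank_pi, Nat.card_eq_fintype_card]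

lemma sub_arrRank_hyperplane (B : Finset (Idx n)) :
    n - arrRank (hyperplane n) B = Nat.card (FreeBlock B) := by
  rw [sub_arrRank_eq_finrank _ _ (solSubmodule ℚ ℚ B) (biInter_hyperplane B),
    finrank_solSubmodule]

noncomputable def box (n m : ℕ) : Finset (Fin n → ℤ) := Fintype.piFinset fun _ => Icc (-(m : ℤ)) m

open Classical in
lemma card_box_filter_isSolution (m : ℕ) (B : Finset (Idx n)) :
    #{x ∈ box n m | IsSolution B x} = (2 * m + 1) ^ Nat.card (FreeBlock B) := by
  have h0 : (0 : ℤ) ∈ Set.Icc (-(m : ℤ)) m := by simp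
  have hA : ∀ a ∈ Set.Icc (-(m : ℤ)) m, -a ∈ Set.Icc (-(m : ℤ)) m :=
    fun a ha => ⟨neg_le_neg ha.2, by linarith [ha.1]⟩
  rw [← Nat.card_eq_finsetCard, Nat.card_congr ((Equiv.subtypeEquivRight fun x => by
      simp [box, Fintype.mem_piFinset]).trans (solutionsEquiv (B := B) h0 hA)),
    Nat.card_fun, Nat.card_eq_fintype_card, Fintype.card_Icc, Int.card_Icc]
  congr 1
  omega

lemma forall_not_onHyperplane_iff {x : Fin n → ℤ} :
    (∀ i, ¬OnHyperplane x i) ↔ (∀ i, x i ≠ 0) ∧ Injective fun i => (x i).natAbs := by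
  refine ⟨fun h => ⟨fun i => h (.inr i), fun i j hij => ?_⟩, ?_⟩
  · by_contra hne
    rcases Int.natAbs_eq_natAbs_iff.1 hij with hx | hx <;>
      rcases lt_or_gt_of_ne hne with hlt | hlt
    · exact h (.inl (.inl ⟨(i, j), hlt⟩)) hx
    · exact h (.inl (.inl ⟨(j, i), hlt⟩)) hx.symm
    · exact h (.inl (.inr ⟨(i, j), hlt⟩)) hx
    · exact h (.inl (.inr ⟨(j, i), hlt⟩)) (show x j = -x i by rw [hx, neg_neg])
  · rintro ⟨h0, hinj⟩ ((p | p) | i) h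
    · exact p.2.ne (hinj (congrArg Int.natAbs (show x p.1.1 = x p.1.2 from h)))
    · exact p.2.ne (hinj (by simp [show x p.1.1 = -x p.1.2 from h]))
    · exact h0 i h

def signedSucc (m : ℕ) (p : Fin m × Bool) : ℤ := bif p.2 then p.1 + 1 else -(p.1 + 1)

lemma natAbs_signedSucc {m : ℕ} (p : Fin m × Bool) : (signedSucc m p).natAbs = p.1 + 1 := by
  obtain ⟨k, _ | _⟩ := p <;> simp [signedSucc] <;> omega

lemma signedSucc_injective (m : ℕ) : Injective (signedSucc m) := by
  rintro ⟨k, _ | _⟩ ⟨l, _ | _⟩ h <;> simp [signedSucc] at h ⊢ <;> omega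

open Classical in
lemma signedSucc_comp_mem_filter {m : ℕ} {f : Fin n → Fin m × Bool}
    (hf : Injective (Prod.fst ∘ f)) :
    signedSucc m ∘ f ∈ {x ∈ box n m | ∀ i, ¬OnHyperplane x i} := by
  refine mem_filter.2 ⟨Fintype.mem_piFinset.2 fun i => ?_, forall_not_onHyperplane_iff.2
    ⟨fun i h => ?_, fun i j hij => hf ?_⟩⟩
  · have := natAbs_signedSucc (f i)
    have := (f i).1.2
    rw [mem_Icc, comp_apply]
    omega
  · simpa [natAbs_signedSucc] using congrArg Int.natAbs h
  · simpa [natAbs_signedSucc, Fin.val_inj] using hij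

lemma exists_signedSucc_eq {m : ℕ} {z : ℤ} (hz : z ∈ Icc (-(m : ℤ)) m) (h0 : z ≠ 0) :
    ∃ p, signedSucc m p = z := by
  rw [mem_Icc] at hz
  refine ⟨(⟨z.natAbs - 1, by omega⟩, decide (0 < z)), ?_⟩
  by_cases hpos : 0 < z <;> simp [signedSucc, hpos] <;> omega

open Classical in
lemma card_box_filter_avoiding (m : ℕ) :
    #{x ∈ box n m | ∀ i, ¬OnHyperplane x i} = m.descFactorial n * 2 ^ n := by
  let e : {f : Fin n → Fin m × Bool // Injective (Prod.fst ∘ f)} →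
      {x // x ∈ {x ∈ box n m | ∀ i, ¬OnHyperplane x i}} := fun f =>
    ⟨signedSucc m ∘ f.1, signedSucc_comp_mem_filter f.2⟩
  have he : Bijective e := by
    refine ⟨fun f g hfg => Subtype.ext (funext fun i => signedSucc_injective m
      (congrFun (congrArg Subtype.val hfg) i)), fun x => ?_⟩
    obtain ⟨hbox, havoid⟩ := mem_filter.1 x.2
    obtain ⟨h0, hinj⟩ := forall_not_onHyperplane_iff.1 havoid
    choose f hf using fun i => exists_signedSucc_eq (Fintype.mem_piFinset.1 hbox i) (h0 i)
    refine ⟨⟨f, fun i j hij => hinj ?_⟩, Subtype.ext (funext hf)⟩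
    show (x.1 i).natAbs = (x.1 j).natAbs
    rw [← hf, ← hf, natAbs_signedSucc, natAbs_signedSucc]
    exact congrArg (fun k : Fin m => (k : ℕ) + 1) hij
  rw [← Nat.card_eq_finsetCard, ← Nat.card_congr (Equiv.ofBijective e he),
    card_injective_comp_fst]
  simp

lemma alternating_sum_eval (m : ℕ) :
    ∑ B : Finset (Idx n), (-1 : ℤ) ^ #B * (2 * m + 1 : ℤ) ^ (n - arrRank (hyperplane n) B)
      = 2 ^ n * m.descFactorial n := by
  classical
  calc _ = ∑ B : Finset (Idx n), (-1 : ℤ) ^ #B * #{x ∈ box n m | IsSolution B x} := by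
        refine sum_congr rfl fun B _ => ?_
        rw [sub_arrRank_hyperplane, card_box_filter_isSolution]
        push_cast
        rfl
    _ = #{x ∈ box n m | ∀ i, ¬OnHyperplane x i} := by
        convert sum_neg_one_pow_mul_card_filter_forall (box n m) fun i x => OnHyperplane x i
        exact Iff.rfl
    _ = 2 ^ n * m.descFactorial n := by
        rw [card_box_filter_avoiding]
        push_cast
        ring

lemma prod_odd_sub_odd (n m : ℕ) :
    ∏ k ∈ range n, ((2 * m + 1 : ℤ) - (2 * k + 1)) = 2 ^ n * m.descFactorial n := by
  rw [← descPochhammer_eval_eq_descFactorial ℤ, descPochhammer_eval_eq_prod_range]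
  calc _ = ∏ k ∈ range n, (2 * ((m : ℤ) - k)) := prod_congr rfl fun k _ => by ring
    _ = _ := by rw [prod_mul_distrib, prod_const, card_range]

end TypeBC

theorem typeBC_characteristic_general (n : ℕ) :
    ∑ B : Finset (({p : Fin n × Fin n // p.1 < p.2} ⊕ {p : Fin n × Fin n // p.1 < p.2}) ⊕ Fin n),
        (-1 : Polynomial ℤ) ^ B.card *
          (X : Polynomial ℤ) ^
            (n - arrRank
              (Sum.elim
                (Sum.elim
                  (fun p : {p : Fin n × Fin n // p.1 < p.2} => {x : Fin n → ℚ | x p.1.1 = x p.1.2})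
                  (fun p : {p : Fin n × Fin n // p.1 < p.2} => {x : Fin n → ℚ | x p.1.1 = - x p.1.2}))
                (fun i : Fin n => {x : Fin n → ℚ | x i = 0})) B)
      = ∏ k ∈ Finset.range n, ((X : Polynomial ℤ) - ((2 * k + 1 : ℕ) : Polynomial ℤ)) := by
  apply Polynomial.eq_of_infinite_eval_eq
  refine (Set.infinite_range_of_injective (f := fun m : ℕ => (2 * m + 1 : ℤ))
    fun a b h => by simpa using h).mono ?_
  rintro _ ⟨m, rfl⟩
  simp only [eval_finsetSum, eval_prod, eval_mul, eval_pow, eval_neg,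
    eval_one, eval_sub, eval_X, eval_natCast]
  push_cast
  exact (TypeBC.alternating_sum_eval m).trans (TypeBC.prod_odd_sub_odd n m).symm

/-- **Characteristic polynomial of the type `BC` Coxeter arrangement.** For `n ≥ 1`, the
arrangement of the hyperplanes `x i = x j`, `x i = -x j` (`i < j`) and `x i = 0` in `ℚ^n`
(all subfamilies are central, being linear) satisfies
`Σ_B (-1)^|B| q^(n - r B) = (q-1)(q-3)⋯(q-2n+1)` in `ℤ[q]`. -/
theorem typeBC_characteristic (n : ℕ) (hn : 1 ≤ n) :
    ∑ B : Finset (({p : Fin n × Fin n // p.1 < p.2} ⊕ {p : Fin n × Fin n // p.1 < p.2}) ⊕ Fin n),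
        (-1 : Polynomial ℤ) ^ B.card *
          (X : Polynomial ℤ) ^
            (n - arrRank
              (Sum.elim
                (Sum.elim
                  (fun p : {p : Fin n × Fin n // p.1 < p.2} => {x : Fin n → ℚ | x p.1.1 = x p.1.2})
                  (fun p : {p : Fin n × Fin n // p.1 < p.2} => {x : Fin n → ℚ | x p.1.1 = - x p.1.2}))
                (fun i : Fin n => {x : Fin n → ℚ | x i = 0})) B)
      = ∏ k ∈ Finset.range n, ((X : Polynomial ℤ) - ((2 * k + 1 : ℕ) : Polynomial ℤ)) :=
  typeBC_characteristic_general n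
end

section
/- (Characteristic polynomial of the type D Coxeter arrangement.) Let n ≥ 1 and let 𝒜 be the arrangement in ℚ^n consisting of the hyperplanes {x : x_i = x_j} and {x : x_i = −x_j} for 1 ≤ i < j ≤ n. Then, in ℤ[q], Σ_{ℬ ⊆ 𝒜} (−1)^{|ℬ|} q^{n−r(ℬ)} = (q−1)(q−3)⋯(q−2n+3)·(q−n+1) = (q−n+1)·∏_{i=1}^{n−1} (q−(2i−1)), where r(ℬ) = n − dim ⋂ℬ (every subfamily is central since all hyperplanes are linear). -/
open Polynomial
open scoped BigOperators

/-!
Evaluate both sides at `q = 2m + 1` and count points of `Tⁿ`, where `T = {-m, …, m} ⊆ ℚ`.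
Every intersection `V` of hyperplanes `x i = ± x j` is the image of an injective linear map
`ℚ^ι → ℚⁿ` each of whose coordinates is `0` or `± y r` (induct on the hyperplanes: pulled back along
such a map, a hyperplane of this shape becomes one in `ℚ^ι`, solved by eliminating one variable).
As `T = -T ∋ 0`, the map restricts to a bijection `T^ι ≃ V ∩ Tⁿ`, so `#(V ∩ Tⁿ) = q ^ dim V`, and by
inclusion–exclusion `χ(q)` counts the `x ∈ Tⁿ` off all hyperplanes, i.e. with pairwise distinct
`|x i|`. Choosing the coordinates one at a time gives `(q - n + 1)(q - 1)(q - 3)⋯(q - 2n + 3)`.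
-/

open Finset Function

section UnitsCast

variable {K : Type*} [Ring K]

lemma intCast_units_mul_self (s : ℤˣ) : ((s : ℤ) : K) * ((s : ℤ) : K) = 1 := by
  rw [← Int.cast_mul, ← Units.val_mul, Int.units_mul_self, Units.val_one, Int.cast_one]

lemma intCast_units_mul_eq_iff (s : ℤˣ) {a b : K} :
    ((s : ℤ) : K) * a = b ↔ a = ((s : ℤ) : K) * b := by
  constructor <;> rintro rfl <;> rw [← mul_assoc, intCast_units_mul_self, one_mul]

lemma intCast_units_ne_zero [Nontrivial K] (s : ℤˣ) : ((s : ℤ) : K) ≠ 0 := fun h => by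
  simpa [h] using intCast_units_mul_self (K := K) s

lemma intCast_units_mul_mem {T : Finset K} (hT : ∀ t ∈ T, -t ∈ T) (s : ℤˣ) {t : K}
    (ht : t ∈ T) : ((s : ℤ) : K) * t ∈ T := by
  rcases Int.units_eq_one_or s with rfl | rfl <;> simp [ht, hT t ht]

end UnitsCast

section SignedHyperplane

variable (K : Type*) [Field K] {ι : Type*}

/-- `{y | y u = γ • y v}`, with `y none` read as `0`; it may be the whole space. -/
def signedHyperplane (u v : Option ι) (γ : ℤˣ) : Submodule K (ι → K) where
  carrier := {y | u.elim 0 y = ((γ : ℤ) : K) * v.elim 0 y}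
  add_mem' {y z} hy hz := by cases u <;> cases v <;> simp_all [mul_add, intCast_units_ne_zero]
  zero_mem' := by cases u <;> cases v <;> simp
  smul_mem' c y hy := by cases u <;> cases v <;> simp_all [mul_left_comm, intCast_units_ne_zero]

variable {K}

lemma mem_signedHyperplane {u v : Option ι} {γ : ℤˣ} {y : ι → K} :
    y ∈ signedHyperplane K u v γ ↔ u.elim 0 y = ((γ : ℤ) : K) * v.elim 0 y := Iff.rfl

lemma signedHyperplane_none_none (γ : ℤˣ) : signedHyperplane K (none : Option ι) none γ = ⊤ := by
  ext y; simp [mem_signedHyperplane]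

lemma signedHyperplane_none_some (b : ι) (γ : ℤˣ) :
    signedHyperplane K none (some b) γ = signedHyperplane K (some b) none 1 := by
  ext y; simp [mem_signedHyperplane, eq_comm, intCast_units_ne_zero]

lemma signedHyperplane_some_self_of_eq_one (a : ι) {γ : ℤˣ} (hγ : ((γ : ℤ) : K) = 1) :
    signedHyperplane K (some a) (some a) γ = ⊤ := by
  ext y; simp [mem_signedHyperplane, hγ]

lemma signedHyperplane_some_self_of_ne_one (a : ι) {γ : ℤˣ} (hγ : ((γ : ℤ) : K) ≠ 1) :
    signedHyperplane K (some a) (some a) γ = signedHyperplane K (some a) none 1 := by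
  ext y
  simp only [mem_signedHyperplane, Option.elim_some, Option.elim_none, mul_zero]
  exact ⟨fun h => (mul_left_eq_self₀.mp h.symm).resolve_left hγ, fun h => by simp [h]⟩

end SignedHyperplane

/-- Data of the linear map `K^ι → K^κ`, `y ↦ (k ↦ ± y (coord k))`, where `coord k = none` stands
for a zero coordinate. -/
structure SignedEmbedding (ι κ : Type*) where
  coord : κ → Option ι
  sign : κ → ℤˣ
  exists_coord_eq_some : ∀ r, ∃ k, coord k = some r

namespace SignedEmbedding

variable (K : Type*) [Field K] {ι ι' κ : Type*}

def toLinearMap (f : SignedEmbedding ι κ) : (ι → K) →ₗ[K] (κ → K) where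
  toFun y k := ((f.sign k : ℤ) : K) * (f.coord k).elim 0 y
  map_add' y z := by ext k; cases h : f.coord k <;> simp [h, mul_add]
  map_smul' c y := by ext k; cases h : f.coord k <;> simp [h, mul_left_comm]

variable {K}

lemma toLinearMap_apply (f : SignedEmbedding ι κ) (y : ι → K) (k : κ) :
    f.toLinearMap K y k = ((f.sign k : ℤ) : K) * (f.coord k).elim 0 y := rfl

protected def id (ι : Type*) : SignedEmbedding ι ι := ⟨some, 1, fun r => ⟨r, rfl⟩⟩

lemma toLinearMap_id : (SignedEmbedding.id ι).toLinearMap K = LinearMap.id := by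
  ext y r; simp [toLinearMap_apply, SignedEmbedding.id]

def comp (f : SignedEmbedding ι κ) (g : SignedEmbedding ι' ι) : SignedEmbedding ι' κ where
  coord k := (f.coord k).bind g.coord
  sign k := f.sign k * (f.coord k).elim 1 g.sign
  exists_coord_eq_some r' := by
    obtain ⟨r, hr⟩ := g.exists_coord_eq_some r'
    obtain ⟨k, hk⟩ := f.exists_coord_eq_some r
    exact ⟨k, by simp [hk, hr]⟩

lemma toLinearMap_comp (f : SignedEmbedding ι κ) (g : SignedEmbedding ι' ι) :
    (f.comp g).toLinearMap K = f.toLinearMap K ∘ₗ g.toLinearMap K := by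
  ext y k
  cases h : f.coord k <;> simp [comp, toLinearMap_apply, h, mul_assoc]

lemma sign_mul_toLinearMap_apply (f : SignedEmbedding ι κ) (y : ι → K) {k : κ} {r : ι}
    (h : f.coord k = some r) : ((f.sign k : ℤ) : K) * f.toLinearMap K y k = y r := by
  rw [toLinearMap_apply, h, ← mul_assoc, intCast_units_mul_self, one_mul]
  rfl

lemma toLinearMap_injective (f : SignedEmbedding ι κ) : Injective (f.toLinearMap K) := by
  intro y z h
  funext r
  obtain ⟨k, hk⟩ := f.exists_coord_eq_some r
  rw [← f.sign_mul_toLinearMap_apply y hk, ← f.sign_mul_toLinearMap_apply z hk, h]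

lemma comap_signedHyperplane (f : SignedEmbedding ι κ) (u v : Option κ) (γ : ℤˣ) :
    (signedHyperplane K u v γ).comap (f.toLinearMap K) =
      signedHyperplane K (u.bind f.coord) (v.bind f.coord)
        (u.elim 1 f.sign * γ * v.elim 1 f.sign) := by
  ext y
  cases u <;> cases v <;>
    simp [mem_signedHyperplane, toLinearMap_apply, intCast_units_mul_eq_iff, mul_assoc,
      intCast_units_ne_zero]

/-- Solving `y w = γ • y o` for the coordinate `w`. -/
def substitute [DecidableEq ι] (w : ι) (o : Option {r // r ≠ w}) (γ : ℤˣ) :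
    SignedEmbedding {r // r ≠ w} ι where
  coord r := if h : r = w then o else some ⟨r, h⟩
  sign r := if r = w then γ else 1
  exists_coord_eq_some r := ⟨r, dif_neg r.2⟩

lemma range_substitute [DecidableEq ι] (w : ι) (o : Option {r // r ≠ w}) (γ : ℤˣ) :
    LinearMap.range ((substitute w o γ).toLinearMap K) =
      signedHyperplane K (some w) (o.map Subtype.val) γ := by
  ext y
  constructor
  · rintro ⟨z, rfl⟩
    rcases o with _ | ⟨r, hr⟩
    · simp [mem_signedHyperplane, toLinearMap_apply, substitute]
    · simp [mem_signedHyperplane, toLinearMap_apply, substitute, hr]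
  · intro hy
    refine ⟨fun r => y r, funext fun r => ?_⟩
    by_cases hr : r = w
    · subst hr
      cases o <;> simp_all [mem_signedHyperplane, toLinearMap_apply, substitute]
    · simp [toLinearMap_apply, substitute, hr]

lemma card_filter_mem_range [Fintype ι] [Fintype κ] [DecidableEq κ]
    (f : SignedEmbedding ι κ) {T : Finset K} (h0 : 0 ∈ T) (hT : ∀ t ∈ T, -t ∈ T)
    [DecidablePred (· ∈ LinearMap.range (f.toLinearMap K))] :
    #{x ∈ Fintype.piFinset fun _ : κ => T | x ∈ LinearMap.range (f.toLinearMap K)} =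
      #T ^ Fintype.card ι := by
  classical
  suffices {x ∈ Fintype.piFinset fun _ : κ => T | x ∈ LinearMap.range (f.toLinearMap K)} =
      (Fintype.piFinset fun _ : ι => T).map ⟨_, f.toLinearMap_injective⟩ by
    rw [this, card_map, Fintype.card_piFinset, prod_const, card_univ]
  ext x
  simp only [mem_filter, Fintype.mem_piFinset, LinearMap.mem_range, mem_map,
    Function.Embedding.coeFn_mk]
  constructor
  · rintro ⟨hx, y, rfl⟩
    refine ⟨y, fun r => ?_, rfl⟩
    obtain ⟨k, hk⟩ := f.exists_coord_eq_some r
    rw [← f.sign_mul_toLinearMap_apply y hk]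
    exact intCast_units_mul_mem hT _ (hx k)
  · rintro ⟨y, hy, rfl⟩
    refine ⟨fun k => intCast_units_mul_mem hT _ ?_, y, rfl⟩
    cases f.coord k
    exacts [h0, hy _]

end SignedEmbedding

open SignedEmbedding

def IsSignedCoordinate {K : Type*} [Field K] {κ : Type*} (V : Submodule K (κ → K)) : Prop :=
  ∃ (ι : Type) (_ : Fintype ι) (f : SignedEmbedding ι κ), LinearMap.range (f.toLinearMap K) = V

namespace IsSignedCoordinate

variable {K : Type*} [Field K] {κ : Type}

lemma top [Fintype κ] : IsSignedCoordinate (⊤ : Submodule K (κ → K)) :=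
  ⟨κ, inferInstance, .id κ, by rw [toLinearMap_id, LinearMap.range_id]⟩

lemma of_substitute [Fintype κ] [DecidableEq κ] (w : κ) (o : Option {r // r ≠ w}) (γ : ℤˣ) :
    IsSignedCoordinate (signedHyperplane K (some w) (o.map Subtype.val) γ) :=
  ⟨_, inferInstance, substitute w o γ, range_substitute w o γ⟩

theorem _root_.isSignedCoordinate_signedHyperplane [Fintype κ] (u v : Option κ) (γ : ℤˣ) :
    IsSignedCoordinate (signedHyperplane K u v γ) := by
  classical
  rcases u with _ | a <;> rcases v with _ | b
  · rw [signedHyperplane_none_none]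
    exact top
  · rw [signedHyperplane_none_some]
    exact of_substitute b none 1
  · exact of_substitute a none γ
  · by_cases hab : a = b
    · subst hab
      by_cases hγ : ((γ : ℤ) : K) = 1
      · rw [signedHyperplane_some_self_of_eq_one a hγ]
        exact top
      · rw [signedHyperplane_some_self_of_ne_one a hγ]
        exact of_substitute a none 1
    · exact of_substitute a (some ⟨b, Ne.symm hab⟩) γ

lemma inf_signedHyperplane {V : Submodule K (κ → K)} (hV : IsSignedCoordinate V)
    (u v : Option κ) (γ : ℤˣ) : IsSignedCoordinate (V ⊓ signedHyperplane K u v γ) := by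
  obtain ⟨ι, _, f, rfl⟩ := hV
  obtain ⟨ι', _, g, hg⟩ := isSignedCoordinate_signedHyperplane (K := K) (u.bind f.coord)
    (v.bind f.coord) (u.elim 1 f.sign * γ * v.elim 1 f.sign)
  refine ⟨ι', inferInstance, f.comp g, ?_⟩
  rw [← Submodule.map_comap_eq, comap_signedHyperplane, ← hg, toLinearMap_comp,
    LinearMap.range_comp]

lemma iInf [Fintype κ] {I : Type} {H : I → Submodule K (κ → K)}
    (hH : ∀ e, ∃ u v γ, H e = signedHyperplane K u v γ)
    (B : Finset I) : IsSignedCoordinate (⨅ e ∈ B, H e) := by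
  classical
  induction B using Finset.induction_on with
  | empty => simpa using top
  | insert e B _ ih =>
    obtain ⟨u, v, γ, he⟩ := hH e
    rw [Finset.iInf_insert, inf_comm, he]
    exact ih.inf_signedHyperplane u v γ

lemma card_filter_mem [Fintype κ] [DecidableEq κ] {V : Submodule K (κ → K)}
    (hV : IsSignedCoordinate V) [DecidablePred (· ∈ V)] {T : Finset K} (h0 : 0 ∈ T)
    (hT : ∀ t ∈ T, -t ∈ T) :
    #{x ∈ Fintype.piFinset fun _ : κ => T | x ∈ V} = #T ^ Module.finrank K V := by
  obtain ⟨ι, _, f, rfl⟩ := hV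
  rw [LinearMap.finrank_range_of_inj f.toLinearMap_injective, Module.finrank_fintype_fun_eq_card,
    ← f.card_filter_mem_range h0 hT]

end IsSignedCoordinate

theorem Finset.sum_neg_one_pow_card_mul_card_filter_forall_mem {α ι : Type*} [Fintype ι]
    (U : Finset α) (P : ι → α → Prop) [∀ e, DecidablePred (P e)] :
    ∑ B : Finset ι, (-1 : ℤ) ^ #B * #{x ∈ U | ∀ e ∈ B, P e x} = #{x ∈ U | ∀ e, ¬ P e x} := by
  have hx : ∀ x, ∑ B : Finset ι, (if ∀ e ∈ B, P e x then (-1 : ℤ) ^ #B else 0) =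
      if ∀ e, ¬ P e x then 1 else 0 := by
    intro x
    have hB : ({B | ∀ e ∈ B, P e x} : Finset (Finset ι)) = ({e | P e x} : Finset ι).powerset := by
      ext B; simp [subset_iff]
    rw [← sum_filter, hB]
    classical
    rw [sum_powerset_neg_one_pow_card]
    simp [filter_eq_empty_iff]
  calc _ = ∑ x ∈ U, ∑ B : Finset ι, (if ∀ e ∈ B, P e x then (-1 : ℤ) ^ #B else 0) := by
        simp only [card_filter, Nat.cast_sum, Nat.cast_ite, Nat.cast_one, Nat.cast_zero, mul_sum,
          mul_ite, mul_one, mul_zero]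
        exact sum_comm
    _ = #{x ∈ U | ∀ e, ¬ P e x} := by
        simp only [hx, card_filter, Nat.cast_sum, Nat.cast_ite, Nat.cast_one, Nat.cast_zero]

theorem sum_neg_one_pow_mul_card_pow_finrank_iInf {K : Type*} [Field K]
    {κ I : Type} [Fintype κ] [DecidableEq κ] [Fintype I] {H : I → Submodule K (κ → K)}
    (hH : ∀ e, ∃ u v γ, H e = signedHyperplane K u v γ) [∀ e, DecidablePred (· ∈ H e)]
    {T : Finset K} (h0 : 0 ∈ T) (hT : ∀ t ∈ T, -t ∈ T) :
    ∑ B : Finset I, (-1 : ℤ) ^ #B * (#T : ℤ) ^ Module.finrank K ↥(⨅ e ∈ B, H e) =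
      #{x ∈ Fintype.piFinset fun _ : κ => T | ∀ e, x ∉ H e} := by
  classical
  rw [← sum_neg_one_pow_card_mul_card_filter_forall_mem]
  refine sum_congr rfl fun B _ => ?_
  rw [← Nat.cast_pow, ← (IsSignedCoordinate.iInf hH B).card_filter_mem h0 hT]
  congr 3
  ext x
  simp [Submodule.mem_iInf]

lemma Submodule.direction_affineSpan_coe {k V : Type*} [Ring k] [AddCommGroup V] [Module k V]
    (p : Submodule k V) : (affineSpan k (p : Set V)).direction = p := by
  have hp : (p : Set V) = (p.toAffineSubspace : Set V) := rfl
  rw [hp, AffineSubspace.affineSpan_coe, toAffineSubspace_direction]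

lemma sub_arrRank_eq_finrank_iInf {d : ℕ} {I : Type} (p : I → Submodule ℚ (Fin d → ℚ))
    (B : Finset I) :
    d - arrRank (fun i => (p i : Set (Fin d → ℚ))) B = Module.finrank ℚ ↥(⨅ i ∈ B, p i) := by
  have hcoe : (⋂ i ∈ B, (p i : Set (Fin d → ℚ))) = ↑(⨅ i ∈ B, p i) := by
    simp [Submodule.coe_iInf]
  rw [arrRank, hcoe, Submodule.direction_affineSpan_coe]
  exact Nat.sub_sub_self ((Submodule.finrank_le _).trans_eq (Module.finrank_fin_fun ℚ))

section AbsInjective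

variable {α : Type*} [AddCommGroup α] [LinearOrder α]

lemma injective_abs_cons_iff {k : ℕ} {t : α} {y : Fin k → α} :
    Injective (fun i => |(Fin.cons t y : Fin (k + 1) → α) i|) ↔
      (∀ i, y i ∉ ({t, -t} : Finset α)) ∧ Injective fun i => |y i| := by
  rw [show (fun i => |(Fin.cons t y : Fin (k + 1) → α) i|) = Fin.cons |t| fun i => |y i| from
    Fin.comp_cons (fun a : α => |a|) t y, Fin.cons_injective_iff]
  simp [abs_eq_abs]

lemma card_filter_injective_abs_succ (S : Finset α) (k : ℕ) :
    #{x ∈ Fintype.piFinset fun _ : Fin (k + 1) => S | Injective fun i => |x i|} =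
      ∑ t ∈ S, #{y ∈ Fintype.piFinset fun _ : Fin k => S \ {t, -t} | Injective fun i => |y i|} := by
  rw [card_eq_sum_card_fiberwise (f := fun x => x 0) (t := S) fun x hx => by
    exact Fintype.mem_piFinset.mp (mem_filter.mp hx).1 0]
  refine sum_congr rfl fun t ht =>
    card_nbij' Fin.tail (fun y => (Fin.cons t y : Fin (k + 1) → α)) ?_ ?_ ?_ ?_
  · intro x hx
    simp only [mem_coe, mem_filter, Fintype.mem_piFinset] at hx ⊢
    obtain ⟨⟨hxS, hinj⟩, rfl⟩ := hx
    rw [← Fin.cons_self_tail x, injective_abs_cons_iff] at hinj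
    exact ⟨fun i => mem_sdiff.mpr ⟨hxS i.succ, hinj.1 i⟩, hinj.2⟩
  · intro y hy
    simp only [mem_coe, mem_filter, Fintype.mem_piFinset, mem_sdiff] at hy ⊢
    refine ⟨⟨Fin.cases ht fun i => (hy.1 i).1, ?_⟩, rfl⟩
    exact injective_abs_cons_iff.mpr ⟨fun i => (hy.1 i).2, hy.2⟩
  · intro x hx
    simp only [mem_coe, mem_filter] at hx
    rw [← hx.2]
    exact Fin.cons_self_tail x
  · intro y _
    exact Fin.tail_cons _ _

variable {S : Finset α}

lemma neg_mem_sdiff_pair (hS : ∀ s ∈ S, -s ∈ S) (t : α) :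
    ∀ s ∈ S \ {t, -t}, -s ∈ S \ {t, -t} := by
  intro s hs
  simp only [mem_sdiff, mem_insert, mem_singleton, not_or] at hs ⊢
  exact ⟨hS s hs.1, fun h => hs.2.2 (by rw [← h, neg_neg]), fun h => hs.2.1 (neg_injective h)⟩

variable [IsOrderedAddMonoid α]

lemma card_sdiff_pair (hS : ∀ s ∈ S, -s ∈ S) {t : α} (ht : t ∈ S) (ht0 : t ≠ 0) :
    (#(S \ {t, -t}) : ℤ) = #S - 2 := by
  have hsub : {t, -t} ⊆ S := insert_subset ht (singleton_subset_iff.mpr (hS t ht))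
  rw [card_sdiff_of_subset hsub, card_pair (self_ne_neg.mpr ht0),
    Nat.cast_sub ((card_pair (self_ne_neg.mpr ht0)).symm.trans_le (card_le_card hsub))]
  rfl

theorem card_filter_injective_abs_of_zero_notMem (hS : ∀ s ∈ S, -s ∈ S) (h0 : 0 ∉ S) (k : ℕ) :
    (#{x ∈ Fintype.piFinset fun _ : Fin k => S | Injective fun i => |x i|} : ℤ) =
      ∏ i ∈ range k, ((#S : ℤ) - 2 * i) := by
  induction k generalizing S with
  | zero => simp [Injective]
  | succ k ih =>
    rw [card_filter_injective_abs_succ, Nat.cast_sum, prod_range_succ']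
    have hterm : ∀ t ∈ S, (#{y ∈ Fintype.piFinset fun _ : Fin k => S \ {t, -t} |
        Injective fun i => |y i|} : ℤ) = ∏ i ∈ range k, ((#S : ℤ) - 2 * (i + 1 : ℕ)) := by
      intro t ht
      rw [ih (neg_mem_sdiff_pair hS t) fun h => h0 (mem_sdiff.mp h).1,
        card_sdiff_pair hS ht fun h => h0 (h ▸ ht)]
      refine prod_congr rfl fun i _ => ?_
      push_cast
      ring
    rw [sum_congr rfl hterm, sum_const, nsmul_eq_mul]
    simp [mul_comm]

theorem card_filter_injective_abs_of_zero_mem (hS : ∀ s ∈ S, -s ∈ S) (h0 : 0 ∈ S) (k : ℕ) :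
    (#{x ∈ Fintype.piFinset fun _ : Fin (k + 1) => S | Injective fun i => |x i|} : ℤ) =
      ((#S : ℤ) - k) * ∏ i ∈ range k, ((#S : ℤ) - (2 * i + 1)) := by
  induction k generalizing S with
  | zero => simp [Injective]
  | succ k ih =>
    rw [card_filter_injective_abs_succ, Nat.cast_sum, ← add_sum_erase S _ h0]
    have hS0 : ∀ s ∈ S.erase 0, -s ∈ S.erase 0 := fun s hs =>
      mem_erase.mpr ⟨neg_ne_zero.mpr (mem_erase.mp hs).1, hS s (mem_erase.mp hs).2⟩
    have hcard0 : (#(S.erase 0) : ℤ) = #S - 1 := by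
      rw [card_erase_of_mem h0, Nat.cast_sub (one_le_card.mpr ⟨0, h0⟩), Nat.cast_one]
    have hzero : S \ {0, -0} = S.erase 0 := by
      rw [neg_zero, insert_eq_self.mpr (mem_singleton_self 0), sdiff_singleton_eq_erase]
    have hterm : ∀ t ∈ S.erase 0, (#{y ∈ Fintype.piFinset fun _ : Fin (k + 1) => S \ {t, -t} |
        Injective fun i => |y i|} : ℤ) =
          ((#S : ℤ) - 2 - k) * ∏ i ∈ range k, ((#S : ℤ) - (2 * (i + 1 : ℕ) + 1)) := by
      intro t ht
      obtain ⟨ht0, ht⟩ := mem_erase.mp ht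
      have h0' : 0 ∈ S \ {t, -t} := by
        simp only [mem_sdiff, mem_insert, mem_singleton, not_or]
        exact ⟨h0, ht0.symm, fun h => ht0 (neg_eq_zero.mp h.symm)⟩
      rw [ih (neg_mem_sdiff_pair hS t) h0', card_sdiff_pair hS ht ht0]
      congr 1
      refine prod_congr rfl fun i _ => ?_
      push_cast
      ring
    rw [hzero, card_filter_injective_abs_of_zero_notMem hS0 (notMem_erase 0 S), hcard0,
      sum_congr rfl hterm, sum_const, nsmul_eq_mul, hcard0, prod_range_succ', prod_range_succ']
    have hP : ∏ i ∈ range k, ((#S : ℤ) - 1 - 2 * (i + 1 : ℕ)) =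
        ∏ i ∈ range k, ((#S : ℤ) - (2 * (i + 1 : ℕ) + 1)) :=
      prod_congr rfl fun i _ => by ring
    rw [hP]
    push_cast
    ring

end AbsInjective

def typeDHyperplane (n : ℕ) :
    {p : Fin n × Fin n // p.1 < p.2} ⊕ {p : Fin n × Fin n // p.1 < p.2} → Submodule ℚ (Fin n → ℚ) :=
  Sum.elim (fun p => signedHyperplane ℚ (some p.1.1) (some p.1.2) 1)
    (fun p => signedHyperplane ℚ (some p.1.1) (some p.1.2) (-1))

lemma typeDHyperplane_eq_signedHyperplane {n : ℕ} (e) :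
    ∃ u v γ, typeDHyperplane n e = signedHyperplane ℚ u v γ := by
  rcases e with p | p <;> exact ⟨_, _, _, rfl⟩

lemma coe_typeDHyperplane (n : ℕ) :
    (fun e => (typeDHyperplane n e : Set (Fin n → ℚ))) =
      Sum.elim (fun p : {p : Fin n × Fin n // p.1 < p.2} => {x : Fin n → ℚ | x p.1.1 = x p.1.2})
        (fun p : {p : Fin n × Fin n // p.1 < p.2} => {x : Fin n → ℚ | x p.1.1 = - x p.1.2}) := by
  funext e
  rcases e with p | p <;> ext x <;> simp [typeDHyperplane, mem_signedHyperplane]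

lemma forall_notMem_typeDHyperplane_iff {n : ℕ} {x : Fin n → ℚ} :
    (∀ e, x ∉ typeDHyperplane n e) ↔ Injective fun i => |x i| := by
  rw [injective_iff_pairwise_ne, Std.Symm.pairwise_on]
  simp [Sum.forall, typeDHyperplane, mem_signedHyperplane, abs_eq_abs, Subtype.forall,
    Prod.forall, imp_and, forall_and]

lemma exists_finset_neg_mem_card_eq (m : ℕ) :
    ∃ T : Finset ℚ, 0 ∈ T ∧ (∀ t ∈ T, -t ∈ T) ∧ #T = 2 * m + 1 := by
  refine ⟨(Icc (-(m : ℤ)) m).image Int.cast, mem_image.mpr ⟨0, by simp, Int.cast_zero⟩, ?_, ?_⟩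
  · simp only [mem_image, mem_Icc, forall_exists_index, and_imp]
    rintro _ z hz₁ hz₂ rfl
    exact ⟨-z, ⟨by omega, by omega⟩, Int.cast_neg z⟩
  · rw [card_image_of_injective _ Int.cast_injective, Int.card_Icc]
    omega

/-- **Characteristic polynomial of the type `D` Coxeter arrangement.** For `n ≥ 1`, the
arrangement of the hyperplanes `x i = x j` and `x i = -x j` (`i < j`) in `ℚ^n`
(all subfamilies are central, being linear) satisfies
`Σ_B (-1)^|B| q^(n - r B) = (q-1)(q-3)⋯(q-2n+3)·(q-n+1)` in `ℤ[q]`. -/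
theorem typeD_characteristic (n : ℕ) (hn : 1 ≤ n) :
    ∑ B : Finset ({p : Fin n × Fin n // p.1 < p.2} ⊕ {p : Fin n × Fin n // p.1 < p.2}),
        (-1 : Polynomial ℤ) ^ B.card *
          (X : Polynomial ℤ) ^
            (n - arrRank
              (Sum.elim
                (fun p : {p : Fin n × Fin n // p.1 < p.2} => {x : Fin n → ℚ | x p.1.1 = x p.1.2})
                (fun p : {p : Fin n × Fin n // p.1 < p.2} => {x : Fin n → ℚ | x p.1.1 = - x p.1.2})) B)
      = ((X : Polynomial ℤ) - ((n - 1 : ℕ) : Polynomial ℤ)) *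
          ∏ k ∈ Finset.range (n - 1), ((X : Polynomial ℤ) - ((2 * k + 1 : ℕ) : Polynomial ℤ)) := by
  obtain ⟨k, rfl⟩ : ∃ k, n = k + 1 := ⟨n - 1, by omega⟩
  rw [← coe_typeDHyperplane]
  simp only [sub_arrRank_eq_finrank_iInf, Nat.add_sub_cancel]
  refine eq_of_infinite_eval_eq _ _ <| Set.infinite_of_injective_forall_mem
    (f := fun m : ℕ => (2 * m + 1 : ℤ)) (fun a b h => by simpa using h) fun m => ?_
  obtain ⟨T, h0, hT, hcard⟩ := exists_finset_neg_mem_card_eq m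
  classical
  have hcount := sum_neg_one_pow_mul_card_pow_finrank_iInf
    (typeDHyperplane_eq_signedHyperplane (n := k + 1)) h0 hT
  simp only [forall_notMem_typeDHyperplane_iff] at hcount
  rw [card_filter_injective_abs_of_zero_mem hT h0 k, hcard] at hcount
  simpa [eval_finsetSum, eval_prod] using hcount
end

section
/- (Characteristic polynomial of the arrangement of all linear hyperplanes over a finite field.) Let s be a prime power, 𝔽_s the field with s elements, n ≥ 1, and let 𝒜(s,n) be the arrangement in 𝔽_s^n consisting of all linear hyperplanes, i.e., all (n−1)-dimensional linear subspaces of 𝔽_s^n. Then, in ℤ[q], Σ_{ℬ ⊆ 𝒜(s,n)} (−1)^{|ℬ|} q^{n−r(ℬ)} = (q−1)(q−s)(q−s²)⋯(q−s^{n−1}), where r(ℬ) = n − dim ⋂ℬ (every subfamily is central since all hyperplanes are linear). -/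
/-!
Evaluate both sides at `q = s ^ m` for `m ≥ n`. A subspace `W` contains exactly
`(s ^ m) ^ dim W` of the `m`-tuples of vectors, so by inclusion–exclusion over the hyperplanes
containing a tuple, the left side counts the `m`-tuples lying in no hyperplane, i.e. the spanning
ones. Transposed, these are the linearly independent `n`-tuples in `𝔽_s^m`, of which there are
`∏ k < n, (s ^ m - s ^ k)`. Integer polynomials agreeing at infinitely many points are equal.
-/

open Finset Module Polynomial

theorem Finset.sum_powerset_neg_one_pow_card_ite_forall {α : Type*} [DecidableEq α]
    (s : Finset α) (p : α → Prop) [DecidablePred p] :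
    ∑ B ∈ s.powerset, (if ∀ a ∈ B, p a then (-1 : ℤ) ^ #B else 0)
      = if ∀ a ∈ s, ¬ p a then 1 else 0 := by
  have hfilter : s.powerset.filter (fun B => ∀ a ∈ B, p a) = (s.filter p).powerset := by
    ext B
    simp only [mem_filter, mem_powerset, subset_iff]
    grind
  rw [← sum_filter, hfilter, sum_powerset_neg_one_pow_card]
  exact if_congr filter_eq_empty_iff rfl rfl

section Hyperplanes

variable {K V : Type*} [Field K] [AddCommGroup V] [Module K V] [FiniteDimensional K V]

theorem Submodule.exists_le_finrank_eq_sub_one {W : Submodule K V} (hW : W ≠ ⊤) :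
    ∃ H : Submodule K V, W ≤ H ∧ finrank K H = finrank K V - 1 := by
  obtain ⟨f, hf, hmap⟩ :=
    Submodule.exists_dual_map_eq_bot_of_lt_top hW.lt_top inferInstance
  refine ⟨LinearMap.ker f, fun w hw => ?_, ?_⟩
  · simpa [hmap] using Submodule.mem_map_of_mem (f := f) hw
  · have := Module.Dual.finrank_ker_add_one_of_ne_zero hf
    omega

theorem Submodule.eq_top_iff_forall_not_le_of_finrank_eq_sub_one
    (hV : 0 < finrank K V) (W : Submodule K V) :
    W = ⊤ ↔ ∀ H : Submodule K V, finrank K H = finrank K V - 1 → ¬ W ≤ H := by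
  refine ⟨?_, fun h => by_contra fun hW => ?_⟩
  · rintro rfl H hH hle
    rw [top_le_iff.1 hle, finrank_top] at hH
    omega
  · obtain ⟨H, hle, hH⟩ := Submodule.exists_le_finrank_eq_sub_one hW
    exact h H hH hle

end Hyperplanes

section Counting

variable {K : Type*} [Field K] [Fintype K]

theorem Matrix.span_row_eq_top_iff_linearIndependent_col {m n : Type*} [Fintype m] [Fintype n]
    (A : Matrix m n K) :
    Submodule.span K (Set.range A.row) = ⊤ ↔ LinearIndependent K A.col := by
  rw [linearIndependent_iff_card_eq_finrank_span, Set.finrank, ← A.rank_eq_finrank_span_cols,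
    A.rank_eq_finrank_span_row]
  refine ⟨fun h => by rw [h, finrank_top, finrank_fintype_fun_eq_card], fun h => ?_⟩
  exact Submodule.eq_top_of_finrank_eq (by rw [← h, finrank_fintype_fun_eq_card])

theorem natCard_span_range_eq_top {m n : ℕ} (hnm : n ≤ m) :
    Nat.card {x : Fin m → Fin n → K // Submodule.span K (Set.range x) = ⊤}
      = ∏ k ∈ range n, (Fintype.card K ^ m - Fintype.card K ^ k) := by
  have transpose : {x : Fin m → Fin n → K // Submodule.span K (Set.range x) = ⊤}
      ≃ {y : Fin n → Fin m → K // LinearIndependent K y} :=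
    (Matrix.transposeAddEquiv (Fin m) (Fin n) K).toEquiv.subtypeEquiv fun A =>
      A.span_row_eq_top_iff_linearIndependent_col
  rw [Nat.card_congr transpose, card_linearIndependent (by simpa using hnm), prod_range]
  simp only [finrank_fintype_fun_eq_card, Fintype.card_fin]

variable {V : Type*} [AddCommGroup V] [Module K V] [Finite V]

theorem Submodule.natCard_span_range_le (W : Submodule K V) (m : ℕ) :
    Nat.card {x : Fin m → V // Submodule.span K (Set.range x) ≤ W}
      = (Fintype.card K ^ m) ^ finrank K W := by
  have : Module.Finite K W := Module.Finite.of_finite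
  simp only [Submodule.span_le, Set.range_subset_iff, SetLike.mem_coe]
  rw [Nat.card_congr (Equiv.subtypePiEquivPi (p := fun _ v => v ∈ W)), Nat.card_pi,
    prod_const, card_univ, Fintype.card_fin, Module.natCard_eq_pow_finrank (K := K),
    Nat.card_eq_fintype_card, ← pow_mul, ← pow_mul, mul_comm]

theorem sum_powerset_hyperplanes_eq_natCard_span_range_eq_top
    (𝒜 : Finset (Submodule K V)) (h𝒜 : ∀ H, H ∈ 𝒜 ↔ finrank K H = finrank K V - 1)
    (hV : 0 < finrank K V) (m : ℕ) :
    ∑ B ∈ 𝒜.powerset,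
        (-1 : ℤ) ^ #B * ((Fintype.card K ^ m : ℕ) : ℤ) ^ finrank K ↥(B.inf id)
      = Nat.card {x : Fin m → V // Submodule.span K (Set.range x) = ⊤} := by
  classical
  have : Fintype V := Fintype.ofFinite V
  have : Module.Finite K V := Module.Finite.of_finite
  calc _ = ∑ B ∈ 𝒜.powerset, ∑ x : Fin m → V,
        if ∀ H ∈ B, Submodule.span K (Set.range x) ≤ H then (-1 : ℤ) ^ #B else 0 := by
          refine sum_congr rfl fun B _ => ?_
          rw [← Nat.cast_pow, ← (B.inf id).natCard_span_range_le, Nat.card_eq_fintype_card,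
            Fintype.card_subtype, sum_ite, sum_const_zero, add_zero, sum_const, nsmul_eq_mul,
            mul_comm]
          simp only [Finset.le_inf_iff, id]
    _ = ∑ x : Fin m → V, if Submodule.span K (Set.range x) = ⊤ then 1 else 0 := by
          rw [sum_comm]
          refine sum_congr rfl fun x _ => ?_
          -- `convert` bridges the classical and the lemma's `Decidable` instances.
          convert (sum_powerset_neg_one_pow_card_ite_forall 𝒜
            fun H => Submodule.span K (Set.range x) ≤ H) using 4
          simp only [Submodule.eq_top_iff_forall_not_le_of_finrank_eq_sub_one hV, h𝒜]
    _ = _ := by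
          rw [sum_boole, Nat.card_eq_fintype_card, Fintype.card_subtype]

end Counting

theorem Polynomial.eq_of_forall_eval_pow_eq {p r : ℤ[X]} {b : ℕ} (hb : 1 < b) (n : ℕ)
    (h : ∀ m, n ≤ m → p.eval ((b ^ m : ℕ) : ℤ) = r.eval ((b ^ m : ℕ) : ℤ)) : p = r := by
  refine eq_of_infinite_eval_eq p r (Set.infinite_of_injective_forall_mem
    (f := fun j : ℕ => ((b ^ (n + j) : ℕ) : ℤ)) (fun i j hij => ?_) fun j => h _ (by omega))
  have := Nat.pow_right_injective hb (Nat.cast_injective hij)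
  omega

/-- **Characteristic polynomial of the arrangement of all linear hyperplanes over a finite
field.** Let `F` be the finite field with `s` elements and let `𝒜` be the set of all linear
hyperplanes of `F^n`, i.e. all `(n-1)`-dimensional linear subspaces.  Every subfamily `ℬ ⊆ 𝒜`
is central, with rank `r(ℬ) = n - dim ⋂ ℬ`.  Then
`Σ_{ℬ ⊆ 𝒜} (-1)^|ℬ| q^(n - r ℬ) = (q-1)(q-s)(q-s²)⋯(q-s^(n-1))` in `ℤ[q]`. -/
theorem all_linear_hyperplanes_characteristic
    {F : Type} [Field F] [Fintype F] (s : ℕ) (hs : Fintype.card F = s)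
    (n : ℕ) (hn : 1 ≤ n)
    (𝒜 : Finset (Submodule F (Fin n → F)))
    (h𝒜 : ∀ W : Submodule F (Fin n → F), W ∈ 𝒜 ↔ Module.finrank F ↥W = n - 1) :
    ∑ B ∈ 𝒜.powerset,
        (-1 : Polynomial ℤ) ^ B.card *
          (X : Polynomial ℤ) ^ (n - (n - Module.finrank F ↥(B.inf id)))
      = ∏ k ∈ Finset.range n, ((X : Polynomial ℤ) - ((s ^ k : ℕ) : Polynomial ℤ)) := by
  subst hs
  have hV : 0 < finrank F (Fin n → F) := by rw [finrank_fin_fun]; omega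
  have hcodim : ∀ B : Finset (Submodule F (Fin n → F)),
      n - (n - finrank F ↥(B.inf id)) = finrank F ↥(B.inf id) := fun B =>
    Nat.sub_sub_self (by simpa using (B.inf id).finrank_le)
  refine Polynomial.eq_of_forall_eval_pow_eq (Fintype.one_lt_card (α := F)) n fun m hm => ?_
  simp only [hcodim, eval_finsetSum, eval_prod, eval_mul, eval_pow, eval_neg, eval_one, eval_X,
    eval_sub, eval_natCast]
  rw [sum_powerset_hyperplanes_eq_natCard_span_range_eq_top 𝒜 (by simpa using h𝒜) hV,
    natCard_span_range_eq_top hm, Nat.cast_prod]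
  refine prod_congr rfl fun k hk => Nat.cast_sub (Nat.pow_le_pow_right Fintype.card_pos ?_)
  rw [mem_range] at hk
  omega
end

section
/- (Wagner's theorem: dimension of the space spanned by products of defining forms equals T(𝒜;2,1).) Let 𝕜 be a field of characteristic zero and let l_1, …, l_m be nonzero linear forms on 𝕜^d that are pairwise non-proportional (so they define a central hyperplane arrangement 𝒜 of m distinct hyperplanes in 𝕜^d). Consider the subspace C of the polynomial ring 𝕜[x_1,…,x_d] spanned by the products ∏_{i∈B} l_i over all subsets B ⊆ {1,…,m} (with the empty product equal to 1). Then dim_𝕜 C equals the number of subsets B ⊆ {1,…,m} such that the linear forms (l_i)_{i∈B} are linearly independent over 𝕜; this number is the Tutte polynomial evaluation T(𝒜;2,1). -/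
/-!
Let `P(s) = prodSpan a s` be the span of the products `∏_{i ∈ S} a i` over `S ⊆ s`, viewed as
functions on `V`, and `P(s, l) = prodSpanCompl a s l` the span of those products whose complement
`s \ S` still spans the form `l`, so that `l · P(s, l) ⊆ P(s)`. Write `Ind(s) = indepSets K a s`.
Both inequalities are proved by deletion–contraction of some `e ∉ s` with `a e ≠ 0`; contracting
`e` restricts all forms and functions to the hyperplane `ker (a e)`.

Lower bound: the number of independent `S ⊆ s` with `l ∈ span (a '' S)` is at most `dim P(s, l)`.
Restriction to `ker (a e)` maps `P(s ∪ {e}, l)` onto a space containing the contracted `P(s, l)`,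
and its kernel contains `a e · P(s, l)`, which has the dimension of `P(s, l)` because multiplying a
polynomial function by a nonzero form is injective over an infinite field. At `l = 0` this reads
`#Ind(s) ≤ dim P(s)`.

Upper bound: `P(s ∪ {e}) = P(s) + a e · P(s)`, and the two summands meet in at least
`a e · P(s, a e)`. With the lower bound at `l = a e`,
`dim P(s ∪ {e}) ≤ 2 #Ind(s) - #{S ∈ Ind(s) | a e ∈ span S} = #Ind(s) + #Ind(s / e) = #Ind(s ∪ {e})`.

Over a field of characteristic zero, polynomials are determined by their polynomial functions.
-/

open Module Submodule Finset LinearMap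

section LinearAlgebra

variable {K : Type*} [Field K] {ι V M M' : Type*}
  [AddCommGroup V] [Module K V] [AddCommGroup M] [Module K M] [AddCommGroup M'] [Module K M']

theorem ker_dualRestrict_ker (l : Dual K V) :
    ker (ker l).dualRestrict = K ∙ l := by
  rw [dualRestrict_ker_eq_dualAnnihilator, ← LinearMap.range_dualMap_eq_dualAnnihilator_ker,
    LinearMap.range_dualMap_dual_eq_span_singleton]

theorem dualRestrict_ker_self (l : Dual K V) : (ker l).dualRestrict l = 0 := by
  ext x
  exact x.2

theorem linearIndepOn_comp_iff_of_ker_eq_span_singleton (f : M →ₗ[K] M') {x : M} (hx : x ≠ 0)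
    (hf : ker f = K ∙ x) {a : ι → M} {s : Set ι} :
    LinearIndepOn K (f ∘ a) s ↔ LinearIndepOn K a s ∧ x ∉ span K (a '' s) := by
  rw [← disjoint_span_singleton' hx, ← hf, Set.image_eq_range]
  exact ⟨fun h => ⟨h.of_comp f, range_ker_disjoint h⟩,
    fun ⟨h, hd⟩ => (f.linearIndependent_iff_of_disjoint hd).2 h⟩

theorem mem_span_insert_of_map_mem_span_image (f : M →ₗ[K] M') {x y : M}
    (hf : ker f = K ∙ x) {T : Set M} (hy : f y ∈ span K (f '' T)) :
    y ∈ span K (insert x T) := by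
  rw [← Submodule.map_span, ← mem_comap, comap_map_eq, hf, sup_comm] at hy
  rwa [span_insert]

theorem Submodule.finrank_map_add_finrank_le_of_le_ker (f : M →ₗ[K] M')
    {L N : Submodule K M} [FiniteDimensional K L] (hNL : N ≤ L) (hN : N ≤ ker f) :
    finrank K (L.map f) + finrank K N ≤ finrank K L := by
  have hrank := (f.domRestrict L).finrank_range_add_finrank_ker
  rw [LinearMap.range_domRestrict] at hrank
  have hker : comap L.subtype N ≤ ker (f.domRestrict L) := fun x hx => hN hx
  have hN_eq := (comapSubtypeEquivOfLe hNL).finrank_eq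
  have hN_le := Submodule.finrank_mono hker
  omega

end LinearAlgebra

theorem Finset.card_filter_powerset_insert {ι : Type*} [DecidableEq ι] {e : ι} {s : Finset ι}
    (he : e ∉ s) (P : Finset ι → Prop) [DecidablePred P] :
    #{S ∈ (insert e s).powerset | P S} =
      #{S ∈ s.powerset | P S} + #{S ∈ s.powerset | P (insert e S)} := by
  simp only [card_filter]
  exact sum_powerset_insert he _

section PolyFun

variable (K V : Type*) [Field K] [AddCommGroup V] [Module K V]

def polyFun : Subalgebra K (V → K) :=
  Algebra.adjoin K (Set.range fun φ : Dual K V => ⇑φ)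

variable {K V}

theorem exists_polynomial_eval_eq_of_mem_polyFun {f : V → K} (hf : f ∈ polyFun K V) (x y : V) :
    ∃ p : Polynomial K, ∀ t : K, f (x + t • y) = p.eval t := by
  induction hf using Algebra.adjoin_induction with
  | mem g hg =>
    obtain ⟨φ, rfl⟩ := hg
    refine ⟨.C (φ x) + .C (φ y) * .X, fun t => ?_⟩
    simp only [map_add, map_smul, smul_eq_mul, Polynomial.eval_add, Polynomial.eval_mul,
      Polynomial.eval_C, Polynomial.eval_X]
    ring
  | algebraMap r => exact ⟨.C r, fun t => by simp⟩
  | add g h _ _ hg hh =>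
    obtain ⟨p, hp⟩ := hg; obtain ⟨q, hq⟩ := hh
    exact ⟨p + q, fun t => by simp [hp, hq]⟩
  | mul g h _ _ hg hh =>
    obtain ⟨p, hp⟩ := hg; obtain ⟨q, hq⟩ := hh
    exact ⟨p * q, fun t => by simp [hp, hq]⟩

theorem eq_zero_of_dual_mul_eq_zero [Infinite K] {l : Dual K V} (hl : l ≠ 0) {f : V → K}
    (hf : f ∈ polyFun K V) (h : ⇑l * f = 0) : f = 0 := by
  obtain ⟨y, hy⟩ := LinearMap.surjective_iff_ne_zero.mpr hl 1
  funext x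
  obtain ⟨p, hp⟩ := exists_polynomial_eval_eq_of_mem_polyFun hf x y
  -- on the line `x + t • y` the factor `l` equals `l x + t`, which vanishes only once
  have hroots : {t | t ≠ -l x} ⊆ {t | p.IsRoot t} := fun t ht => by
    have := congrFun h (x + t • y)
    simp only [Pi.mul_apply, map_add, map_smul, hy, smul_eq_mul, mul_one, hp, Pi.zero_apply] at this
    exact (mul_eq_zero.mp this).resolve_left fun h0 => ht (eq_neg_of_add_eq_zero_right h0)
  have hp0 : p = 0 := p.eq_zero_of_infinite_isRoot
    (((Set.finite_singleton (-l x)).infinite_compl).mono hroots)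
  simpa [hp0] using hp 0

theorem finrank_map_mulLeft_dual [Infinite K] {l : Dual K V} (hl : l ≠ 0)
    {N : Submodule K (V → K)} (hN : N ≤ Subalgebra.toSubmodule (polyFun K V)) :
    finrank K (N.map (mulLeft K ⇑l)) = finrank K N := by
  rw [← LinearMap.range_domRestrict]
  refine LinearMap.finrank_range_of_inj fun f g hfg => Subtype.ext ?_
  rw [← sub_eq_zero]
  refine eq_zero_of_dual_mul_eq_zero hl (sub_mem (hN f.2) (hN g.2)) ?_
  simpa [mul_sub, sub_eq_zero] using hfg

end PolyFun

section Products

variable {K ι V : Type*} [Field K] [AddCommGroup V] [Module K V]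

def prodForms (a : ι → Dual K V) (S : Finset ι) : V → K := ∏ i ∈ S, ⇑(a i)

def prodSpan (a : ι → Dual K V) (s : Finset ι) : Submodule K (V → K) :=
  span K (prodForms a '' ↑s.powerset)

instance (a : ι → Dual K V) (s : Finset ι) : FiniteDimensional K (prodSpan a s) :=
  FiniteDimensional.span_of_finite K (s.powerset.finite_toSet.image _)

theorem prodForms_mem_polyFun (a : ι → Dual K V) (S : Finset ι) :
    prodForms a S ∈ polyFun K V :=
  Subalgebra.prod_mem _ fun i _ => Algebra.subset_adjoin ⟨a i, rfl⟩

theorem prodSpan_le_polyFun (a : ι → Dual K V) (s : Finset ι) :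
    prodSpan a s ≤ Subalgebra.toSubmodule (polyFun K V) :=
  span_le.2 <| Set.image_subset_iff.2 fun S _ => prodForms_mem_polyFun a S

theorem funLeft_prodForms (a : ι → Dual K V) (W : Submodule K V) (S : Finset ι) :
    funLeft K K W.subtype (prodForms a S) = prodForms (W.dualRestrict ∘ a) S := by
  ext x
  simp [prodForms, Finset.prod_apply, funLeft_apply]

variable [DecidableEq ι]

def prodSpanCompl (a : ι → Dual K V) (s : Finset ι) (l : Dual K V) : Submodule K (V → K) :=
  span K (prodForms a '' {S | S ⊆ s ∧ l ∈ span K (a '' ↑(s \ S))})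

theorem prodSpanCompl_le_prodSpan (a : ι → Dual K V) (s : Finset ι) (l : Dual K V) :
    prodSpanCompl a s l ≤ prodSpan a s :=
  span_mono <| Set.image_mono fun _ hS => Finset.mem_powerset.2 hS.1

instance (a : ι → Dual K V) (s : Finset ι) (l : Dual K V) :
    FiniteDimensional K (prodSpanCompl a s l) :=
  Submodule.finiteDimensional_of_le (prodSpanCompl_le_prodSpan a s l)

theorem prodSpanCompl_zero (a : ι → Dual K V) (s : Finset ι) :
    prodSpanCompl a s 0 = prodSpan a s := by
  rw [prodSpanCompl, prodSpan]
  congr 2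
  ext S
  simp [zero_mem]

theorem prodSpanCompl_mono (a : ι → Dual K V) {s t : Finset ι} (h : s ⊆ t) (l : Dual K V) :
    prodSpanCompl a s l ≤ prodSpanCompl a t l :=
  span_mono <| Set.image_mono fun S ⟨hS, hl⟩ =>
    ⟨hS.trans h, span_mono (Set.image_mono (by gcongr)) hl⟩

theorem prodForms_insert (a : ι → Dual K V) {e : ι} {S : Finset ι} (he : e ∉ S) :
    prodForms a (insert e S) = ⇑(a e) * prodForms a S :=
  Finset.prod_insert he

theorem map_mulLeft_prodSpanCompl_le (a : ι → Dual K V) (s : Finset ι) (l : Dual K V) :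
    (prodSpanCompl a s l).map (mulLeft K ⇑l) ≤ prodSpan a s := by
  rw [prodSpanCompl, Submodule.map_span, span_le]
  rintro _ ⟨_, ⟨S, ⟨hSs, hl⟩, rfl⟩, rfl⟩
  -- `φ ↦ φ * ∏_{i ∈ S} a i` sends `a j` to the product over `insert j S`
  let Φ := (LinearMap.mulRight K (prodForms a S)).comp (LinearMap.ltoFun K V K K)
  have hΦ : Φ l ∈ span K (Φ '' (a '' ↑(s \ S))) := apply_mem_span_image_of_mem_span Φ hl
  refine span_le.2 ?_ hΦ
  rintro _ ⟨_, ⟨j, hj, rfl⟩, rfl⟩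
  rw [Finset.coe_sdiff, Set.mem_sdiff] at hj
  refine subset_span ⟨insert j S, Finset.mem_powerset.2 (Finset.insert_subset hj.1 hSs), ?_⟩
  exact prodForms_insert a hj.2

theorem prodSpan_insert (a : ι → Dual K V) {e : ι} {s : Finset ι} (he : e ∉ s) :
    prodSpan a (insert e s) = prodSpan a s ⊔ (prodSpan a s).map (mulLeft K ⇑(a e)) := by
  rw [prodSpan, Finset.powerset_insert, Finset.coe_union, Set.image_union, span_union, prodSpan,
    Submodule.map_span, Finset.coe_image, Set.image_image, Set.image_image]
  congr 2
  refine Set.image_congr fun T hT => prodForms_insert a fun heT => he ?_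
  exact Finset.mem_powerset.1 hT heT

theorem map_mulLeft_prodSpanCompl_le_insert (a : ι → Dual K V) {e : ι} {s : Finset ι}
    (he : e ∉ s) (l : Dual K V) :
    (prodSpanCompl a s l).map (mulLeft K ⇑(a e)) ≤ prodSpanCompl a (insert e s) l := by
  rw [prodSpanCompl, Submodule.map_span]
  refine span_mono ?_
  rintro _ ⟨_, ⟨S, ⟨hSs, hl⟩, rfl⟩, rfl⟩
  refine ⟨insert e S, ⟨Finset.insert_subset_insert e hSs, ?_⟩, ?_⟩
  · rwa [Finset.insert_sdiff_insert, Finset.sdiff_insert_of_notMem he]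
  · exact prodForms_insert a fun heS => he (hSs heS)

theorem map_mulLeft_le_ker_funLeft (N : Submodule K (V → K)) (l : Dual K V) :
    N.map (mulLeft K ⇑l) ≤ ker (funLeft K K (ker l).subtype) := by
  rintro _ ⟨f, -, rfl⟩
  ext ⟨x, hx⟩
  simp [funLeft_apply, LinearMap.mem_ker.1 hx]

theorem prodSpanCompl_dualRestrict_le (a : ι → Dual K V) {e : ι} {s : Finset ι} (he : e ∉ s)
    (l : Dual K V) :
    prodSpanCompl ((ker (a e)).dualRestrict ∘ a) s ((ker (a e)).dualRestrict l)
      ≤ (prodSpanCompl a (insert e s) l).map (funLeft K K (ker (a e)).subtype) := by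
  rw [prodSpanCompl, span_le]
  rintro _ ⟨S, ⟨hSs, hl⟩, rfl⟩
  rw [← funLeft_prodForms]
  refine mem_map_of_mem (subset_span ⟨S, ⟨hSs.trans (Finset.subset_insert e s), ?_⟩, rfl⟩)
  rw [Finset.insert_sdiff_of_notMem s fun heS => he (hSs heS), Finset.coe_insert,
    Set.image_insert_eq]
  rw [Set.image_comp] at hl
  exact mem_span_insert_of_map_mem_span_image _ (ker_dualRestrict_ker (a e)) hl

end Products

section Counting

open scoped Classical

variable (K : Type*) {ι M : Type*} [Field K] [AddCommGroup M] [Module K M]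

noncomputable def indepSets (a : ι → M) (s : Finset ι) : Finset (Finset ι) :=
  s.powerset.filter fun S : Finset ι => LinearIndepOn K a ↑S

variable {K}

theorem indepSets_insert_of_eq_zero [DecidableEq ι] (a : ι → M) {e : ι} (hae : a e = 0)
    (s : Finset ι) :
    indepSets K a (insert e s) = indepSets K a s := by
  ext S
  simp only [indepSets, mem_filter, mem_powerset]
  refine and_congr_left fun hS => subset_insert_iff_of_notMem fun heS => ?_
  exact hS.zero_notMem_image ⟨e, heS, hae⟩

variable {V : Type*} [AddCommGroup V] [Module K V]

theorem card_indepSets_insert [DecidableEq ι] (a : ι → Dual K V) {e : ι}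
    {s : Finset ι} (he : e ∉ s) (hae : a e ≠ 0) :
    #(indepSets K a (insert e s)) =
      #(indepSets K a s) + #(indepSets K ((ker (a e)).dualRestrict ∘ a) s) := by
  rw [indepSets, card_filter_powerset_insert he]
  congr 2
  refine filter_congr fun S hS => ?_
  rw [coe_insert, linearIndepOn_insert fun heS => he (mem_powerset.1 hS heS),
    linearIndepOn_comp_iff_of_ker_eq_span_singleton _ hae (ker_dualRestrict_ker (a e))]

theorem card_indepSets_eq_add (a : ι → Dual K V) (s : Finset ι) {l : Dual K V}
    (hl : l ≠ 0) :
    #(indepSets K a s) =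
      #((indepSets K a s).filter fun S : Finset ι => l ∈ span K (a '' ↑S))
        + #(indepSets K ((ker l).dualRestrict ∘ a) s) := by
  rw [← card_filter_add_card_filter_not (s := indepSets K a s)
    (fun S : Finset ι => l ∈ span K (a '' ↑S))]
  congr 2
  simp only [indepSets, filter_filter]
  refine filter_congr fun S _ => ?_
  rw [linearIndepOn_comp_iff_of_ker_eq_span_singleton _ hl (ker_dualRestrict_ker l)]

theorem card_filter_indepSets_insert_le [DecidableEq ι] (a : ι → Dual K V) {e : ι}
    {s : Finset ι} (he : e ∉ s) (hae : a e ≠ 0) (l : Dual K V) :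
    #((indepSets K a (insert e s)).filter fun S : Finset ι => l ∈ span K (a '' ↑S)) ≤
      #((indepSets K ((ker (a e)).dualRestrict ∘ a) s).filter fun S : Finset ι =>
          (ker (a e)).dualRestrict l ∈ span K (((ker (a e)).dualRestrict ∘ a) '' ↑S))
        + #((indepSets K a s).filter fun S : Finset ι => l ∈ span K (a '' ↑S)) := by
  simp only [indepSets, filter_filter]
  rw [card_filter_powerset_insert he, add_comm]
  refine Nat.add_le_add_right (card_le_card fun T hT => ?_) _
  simp only [mem_filter, mem_powerset] at hT ⊢
  obtain ⟨hTs, hind, hl⟩ := hT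
  have heT : e ∉ T := fun heT => he (hTs heT)
  refine ⟨hTs, ?_, ?_⟩
  · rwa [coe_insert, linearIndepOn_insert heT, ← linearIndepOn_comp_iff_of_ker_eq_span_singleton
      _ hae (ker_dualRestrict_ker (a e))] at hind
  · have := apply_mem_span_image_of_mem_span (ker (a e)).dualRestrict hl
    rwa [coe_insert, Set.image_insert_eq, Set.image_insert_eq, dualRestrict_ker_self,
      span_insert_zero, ← Set.image_comp] at this

end Counting

section DeletionContraction

open scoped Classical

variable {K ι V : Type*} [Field K] [Infinite K] [DecidableEq ι] [AddCommGroup V] [Module K V]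

theorem card_filter_indepSets_le_finrank_prodSpanCompl (a : ι → Dual K V) (l : Dual K V)
    (s : Finset ι) :
    #((indepSets K a s).filter fun S : Finset ι => l ∈ span K (a '' ↑S)) ≤
      finrank K (prodSpanCompl a s l) := by
  induction s using Finset.induction_on generalizing V with
  | empty =>
    have hind : indepSets K a ∅ = {∅} := by simp [indepSets]
    rw [hind, filter_singleton]
    split_ifs with hl
    · rw [card_singleton, one_le_finrank_iff, Submodule.ne_bot_iff]
      refine ⟨prodForms a ∅,
        subset_span ⟨∅, ⟨subset_refl _, by simpa using hl⟩, rfl⟩, ?_⟩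
      simp [prodForms]
    · simp
  | insert e s he ih =>
    by_cases hae : a e = 0
    · rw [indepSets_insert_of_eq_zero a hae]
      exact (ih a l).trans (finrank_mono (prodSpanCompl_mono a (subset_insert e s) l))
    set r := (ker (a e)).dualRestrict
    calc _ ≤ _ := card_filter_indepSets_insert_le a he hae l
      _ ≤ finrank K (prodSpanCompl (r ∘ a) s (r l)) + finrank K (prodSpanCompl a s l) :=
          add_le_add (ih (r ∘ a) (r l)) (ih a l)
      _ ≤ finrank K ((prodSpanCompl a (insert e s) l).map (funLeft K K (ker (a e)).subtype)) +
            finrank K ((prodSpanCompl a s l).map (mulLeft K ⇑(a e))) := by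
          rw [finrank_map_mulLeft_dual hae
            ((prodSpanCompl_le_prodSpan a s l).trans (prodSpan_le_polyFun a s))]
          exact Nat.add_le_add_right (finrank_mono (prodSpanCompl_dualRestrict_le a he l)) _
      _ ≤ finrank K (prodSpanCompl a (insert e s) l) :=
          finrank_map_add_finrank_le_of_le_ker _ (map_mulLeft_prodSpanCompl_le_insert a he l)
            (map_mulLeft_le_ker_funLeft _ _)

theorem finrank_prodSpan_insert_add_le (a : ι → Dual K V) {e : ι} {s : Finset ι}
    (he : e ∉ s) (hae : a e ≠ 0) :
    finrank K (prodSpan a (insert e s)) + finrank K (prodSpanCompl a s (a e)) ≤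
      2 * finrank K (prodSpan a s) := by
  rw [prodSpan_insert a he]
  set P := prodSpan a s
  set μ := mulLeft K ⇑(a e)
  have hsup := finrank_sup_add_finrank_inf_eq P (P.map μ)
  have hinf : finrank K ((prodSpanCompl a s (a e)).map μ) ≤ finrank K ↥(P ⊓ P.map μ) :=
    finrank_mono <| le_inf (map_mulLeft_prodSpanCompl_le a s (a e))
      (map_mono (prodSpanCompl_le_prodSpan a s (a e)))
  rw [finrank_map_mulLeft_dual hae
    ((prodSpanCompl_le_prodSpan a s _).trans (prodSpan_le_polyFun a s))] at hinf
  have hμ := finrank_map_le μ P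
  omega

end DeletionContraction

section Dimension

variable {K ι V : Type*} [Field K] [Infinite K] [AddCommGroup V] [Module K V]

theorem finrank_prodSpan_le (a : ι → Dual K V) (s : Finset ι) :
    finrank K (prodSpan a s) ≤ #(indepSets K a s) := by
  classical
  induction s using Finset.induction_on with
  | empty =>
    have hind : indepSets K a ∅ = {∅} := by simp [indepSets]
    rw [hind, prodSpan, powerset_empty, coe_singleton, Set.image_singleton, card_singleton]
    exact (finrank_span_singleton (by simp [prodForms])).le
  | insert e s he ih =>
    by_cases hae : a e = 0
    · have hμ : mulLeft K ⇑(a e) = 0 := by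
        ext f x
        simp [hae]
      rwa [prodSpan_insert a he, hμ, Submodule.map_zero, sup_bot_eq,
        indepSets_insert_of_eq_zero a hae]
    have h1 := finrank_prodSpan_insert_add_le a he hae
    have h2 := card_filter_indepSets_le_finrank_prodSpanCompl a (a e) s
    have h3 := card_indepSets_insert a he hae
    have h4 := card_indepSets_eq_add a s hae
    omega

theorem finrank_prodSpan (a : ι → Dual K V) (s : Finset ι) :
    finrank K (prodSpan a s) = #(indepSets K a s) := by
  classical
  refine le_antisymm (finrank_prodSpan_le a s) ?_
  have := card_filter_indepSets_le_finrank_prodSpanCompl a 0 s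
  rwa [prodSpanCompl_zero, filter_true_of_mem fun S _ => zero_mem _] at this

end Dimension

theorem indepSets_linearEquiv_comp {K ι M M' : Type*} [Field K] [AddCommGroup M] [Module K M]
    [AddCommGroup M'] [Module K M'] (f : M ≃ₗ[K] M') (a : ι → M) (s : Finset ι) :
    indepSets K (f ∘ a) s = indepSets K a s := by
  ext S
  simp only [indepSets, mem_filter]
  exact and_congr_right fun _ => (f : M →ₗ[K] M').linearIndependent_iff f.ker

theorem natCard_linearIndependent_eq_card_indepSets {K ι M : Type*} [Field K] [AddCommGroup M]
    [Module K M] [Fintype ι] (a : ι → M) :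
    Nat.card {B : Finset ι // LinearIndependent K (fun i : B => a i)} =
      #(indepSets K a univ) := by
  classical
  rw [Nat.card_eq_fintype_card, Fintype.card_subtype, indepSets, powerset_univ]
  rfl

theorem evalₗ_prod_linearForms {K ι σ : Type*} [Field K] [Fintype σ] [DecidableEq σ]
    (v : ι → σ → K) (B : Finset ι) :
    MvPolynomial.evalₗ K σ (∏ i ∈ B, ∑ j, MvPolynomial.C (v i j) * MvPolynomial.X j) =
      prodForms (dotProductEquiv K σ ∘ v) B := by
  ext x
  simp [prodForms, Finset.prod_apply, dotProduct]

theorem map_evalₗ_span_prod_linearForms {K ι σ : Type*} [Field K] [Fintype ι] [Fintype σ]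
    [DecidableEq σ] (v : ι → σ → K) :
    (span K {P : MvPolynomial σ K | ∃ B : Finset ι,
        P = ∏ i ∈ B, ∑ j, MvPolynomial.C (v i j) * MvPolynomial.X j}).map
      (MvPolynomial.evalₗ K σ) = prodSpan (dotProductEquiv K σ ∘ v) univ := by
  have hrange : {P : MvPolynomial σ K | ∃ B : Finset ι,
      P = ∏ i ∈ B, ∑ j, MvPolynomial.C (v i j) * MvPolynomial.X j} =
        Set.range fun B : Finset ι =>
          ∏ i ∈ B, ∑ j, MvPolynomial.C (v i j) * MvPolynomial.X j :=
    Set.ext fun P => exists_congr fun B => eq_comm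
  rw [hrange, Submodule.map_span, ← Set.range_comp, prodSpan, powerset_univ, coe_univ,
    Set.image_univ]
  exact congrArg _ (congrArg _ (funext (evalₗ_prod_linearForms v)))

theorem wagner_dimension_formula_general {K : Type} [Field K] [CharZero K]
    {d m : ℕ} (v : Fin m → Fin d → K) :
    Module.finrank K
        ↥(Submodule.span K
          {P : MvPolynomial (Fin d) K | ∃ B : Finset (Fin m),
            P = ∏ i ∈ B, ∑ j, MvPolynomial.C (v i j) * MvPolynomial.X j})
      = Nat.card {B : Finset (Fin m) // LinearIndependent K (fun i : B => v ↑i)} := by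
  have hinj : Function.Injective (MvPolynomial.evalₗ K (Fin d)) :=
    fun p q h => MvPolynomial.funext fun x => congrFun h x
  rw [(equivMapOfInjective _ hinj _).finrank_eq, map_evalₗ_span_prod_linearForms,
    finrank_prodSpan, indepSets_linearEquiv_comp, natCard_linearIndependent_eq_card_indepSets]

/-- **Wagner's theorem.** Let `K` be a field of characteristic zero and let `l_1, …, l_m` be
nonzero, pairwise non-proportional linear forms on `K^d`, given by their coefficient vectors
`v i` (so `l_i = Σ_j v i j · x_j`).  The subspace of `K[x_1,…,x_d]` spanned by the products
`∏_{i ∈ B} l_i` over all subsets `B ⊆ {1,…,m}` has dimension equal to the number of subsets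
`B` for which the forms `(l_i)_{i ∈ B}` are linearly independent, i.e. the Tutte evaluation
`T(𝒜; 2, 1)` of the corresponding central arrangement `𝒜`. -/
theorem wagner_dimension_formula {K : Type} [Field K] [CharZero K]
    {d m : ℕ} (v : Fin m → Fin d → K)
    (hv : ∀ i, v i ≠ 0)
    (hprop : ∀ i j, i ≠ j → ∀ c : K, v i ≠ c • v j) :
    Module.finrank K
        ↥(Submodule.span K
          {P : MvPolynomial (Fin d) K | ∃ B : Finset (Fin m),
            P = ∏ i ∈ B, ∑ j, MvPolynomial.C (v i j) * MvPolynomial.X j})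
      = Nat.card {B : Finset (Fin m) // LinearIndependent K (fun i : B => v ↑i)} :=
  wagner_dimension_formula_general v
end
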